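/- arXiv:2605.13704 — 7 statements merged into one kernel-verified Lean document; each statement's English description precedes it below -/
import Mathlib

section
/- Let L(s, λ, t) := sup_{μ ∈ ℝ} (λμ − H(s, t, μ)) be the Lagrangian associated to H. Then for every T > 0 there exist constants α̂_T, β̂_T ≥ 0 and ε̂_T ∈ (0, T] such that L(s, λ, t₁) − L(s, λ, t₂) ≤ (α̂_T |λ| + β̂_T) |t₂ − t₁| whenever t₁, t₂ ∈ [0, T], |t₂ − t₁| < ε̂_T, s ∈ [0, ℓ] and λ ∈ ℝ. -/
open Set Filter MeasureTheory

/-- The Lagrangian associated to a Hamiltonian: `L(s, λ, t) = sup_{μ ∈ ℝ} (λμ − H(s, t, μ))`. -/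
noncomputable def Lagrangian (H : ℝ → ℝ → ℝ → ℝ) (s lam t : ℝ) : ℝ :=
  sSup (Set.range fun μ => lam * μ - H s t μ)

/-- Superlinear coercivity: `f r / r → ∞` as `r → ∞`. -/
def Superlinear (f : ℝ → ℝ) : Prop :=
  Tendsto (fun r => f r / r) atTop atTop

/-- `ϑ, Θ` are nondecreasing, convex, superlinearly coercive functions bounding `H` from
below and above on `[0, ℓ] × [0, T] × ℝ`. -/
def CoerciveBounds (H : ℝ → ℝ → ℝ → ℝ) (ℓ T : ℝ) (ϑ Θ : ℝ → ℝ) : Prop :=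
  MonotoneOn ϑ (Ici 0) ∧ ConvexOn ℝ (Ici 0) ϑ ∧ Superlinear ϑ ∧
  MonotoneOn Θ (Ici 0) ∧ ConvexOn ℝ (Ici 0) Θ ∧ Superlinear Θ ∧
  ∀ s ∈ Icc 0 ℓ, ∀ μ : ℝ, ∀ t ∈ Icc 0 T, ϑ |μ| ≤ H s t μ ∧ H s t μ ≤ Θ |μ|

/-!
Fix `C := max (Θ_T 0) 0` and split the competitors `μ` in the supremum defining
`L(s, λ, t₁)` according to whether `H(s, t₁, μ) ≤ |λ| |μ| + C`. In the first case
`H(s, t₁, μ) / (1 + |μ|) ≤ |λ| + C`, so the time-Lipschitz hypothesis (with `t₁, t₂` swapped)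
moves `λμ − H(s, t₁, μ)` below `L(s, λ, t₂)` at the cost of `(α (|λ| + C) + β) |t₂ − t₁|`.
In the second case `λμ − H(s, t₁, μ) < −C ≤ −H(s, t₂, 0)`, which is already below `L(s, λ, t₂)`.
The superlinear lower bound `ϑ_T` only serves to make `L(s, λ, t₂)` a genuine supremum.
-/

/-- The Legendre transform; junk (`0`) wherever the supremum is infinite. -/
noncomputable def legendreTransform (f : ℝ → ℝ) (lam : ℝ) : ℝ :=
  sSup (range fun μ => lam * μ - f μ)

theorem lagrangian_eq_legendreTransform (H : ℝ → ℝ → ℝ → ℝ) (s lam t : ℝ) :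
    Lagrangian H s lam t = legendreTransform (H s t) lam :=
  rfl

theorem le_legendreTransform {f : ℝ → ℝ} {lam : ℝ}
    (hf : BddAbove (range fun μ => lam * μ - f μ)) (μ : ℝ) :
    lam * μ - f μ ≤ legendreTransform f lam :=
  le_csSup hf ⟨μ, rfl⟩

theorem bddAbove_range_mul_sub_of_superlinear {ϑ f : ℝ → ℝ} (hmono : MonotoneOn ϑ (Ici 0))
    (hsl : Superlinear ϑ) (hf : ∀ μ, ϑ |μ| ≤ f μ) (lam : ℝ) :
    BddAbove (range fun μ => lam * μ - f μ) := by
  obtain ⟨R, hR⟩ := (hsl.eventually_ge_atTop |lam|).exists_forall_of_atTop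
  refine ⟨max (|lam| * max R 1 - ϑ 0) 0, ?_⟩
  rintro _ ⟨μ, rfl⟩
  have hlam : lam * μ ≤ |lam| * |μ| := (le_abs_self _).trans (abs_mul _ _).le
  have hfμ := hf μ
  rcases le_or_gt |μ| (max R 1) with hμ | hμ
  · have hϑ0 : ϑ 0 ≤ ϑ |μ| :=
      hmono (mem_Ici.mpr le_rfl) (mem_Ici.mpr (abs_nonneg μ)) (abs_nonneg μ)
    have : |lam| * |μ| ≤ |lam| * max R 1 := mul_le_mul_of_nonneg_left hμ (abs_nonneg lam)
    exact le_max_of_le_left (by linarith)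
  · have hμpos : 0 < |μ| := (lt_of_lt_of_le one_pos (le_max_right R 1)).trans hμ
    have : |lam| * |μ| ≤ ϑ |μ| :=
      (le_div_iff₀ hμpos).mp (hR |μ| ((le_max_left R 1).trans hμ.le))
    exact le_max_of_le_right (by linarith)

theorem legendreTransform_le_add_of_sub_le {f g : ℝ → ℝ} {a b C δ lam : ℝ}
    (ha : 0 ≤ a) (hb : 0 ≤ b) (hC : 0 ≤ C) (hδ : 0 ≤ δ) (hg0 : g 0 ≤ C)
    (hg : BddAbove (range fun μ => lam * μ - g μ))
    (hfg : ∀ μ, g μ - f μ ≤ (a * (f μ / (1 + |μ|)) + b) * δ) :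
    legendreTransform f lam ≤ legendreTransform g lam + (a * (|lam| + C) + b) * δ := by
  refine csSup_le (range_nonempty _) ?_
  rintro _ ⟨μ, rfl⟩
  have hlam : lam * μ ≤ |lam| * |μ| := (le_abs_self _).trans (abs_mul _ _).le
  by_cases hfμ : f μ ≤ |lam| * |μ| + C
  · have hquot : f μ / (1 + |μ|) ≤ |lam| + C := by
      rw [div_le_iff₀ (by positivity)]
      nlinarith [abs_nonneg lam, mul_nonneg hC (abs_nonneg μ)]
    have hcost : (a * (f μ / (1 + |μ|)) + b) * δ ≤ (a * (|lam| + C) + b) * δ := by gcongr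
    linarith [hfg μ, le_legendreTransform hg μ]
  · have hslack : 0 ≤ (a * (|lam| + C) + b) * δ := by positivity
    have hzero := le_legendreTransform hg 0
    rw [mul_zero, zero_sub] at hzero
    linarith

theorem lagrangian_time_lipschitz_general (ℓ : ℝ) (H : ℝ → ℝ → ℝ → ℝ)
    (Hcoer : ∀ T > (0:ℝ), ∃ ϑ Θ : ℝ → ℝ, CoerciveBounds H ℓ T ϑ Θ)
    (Htlip : ∀ T > (0:ℝ), ∃ α β : ℝ, 0 ≤ α ∧ 0 ≤ β ∧ ∃ ε ∈ Ioc 0 T,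
      ∀ s ∈ Icc 0 ℓ, ∀ μ : ℝ, ∀ t₁ ∈ Icc 0 T, ∀ t₂ ∈ Icc 0 T, |t₂ - t₁| < ε →
        H s t₁ μ - H s t₂ μ ≤ (α * (H s t₂ μ / (1 + |μ|)) + β) * |t₂ - t₁|) :
    ∀ T > (0:ℝ), ∃ αh βh : ℝ, 0 ≤ αh ∧ 0 ≤ βh ∧ ∃ εh ∈ Ioc 0 T,
      ∀ s ∈ Icc 0 ℓ, ∀ lam : ℝ, ∀ t₁ ∈ Icc 0 T, ∀ t₂ ∈ Icc 0 T, |t₂ - t₁| < εh →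
        Lagrangian H s lam t₁ - Lagrangian H s lam t₂ ≤ (αh * |lam| + βh) * |t₂ - t₁| := by
  intro T hT
  obtain ⟨ϑ, Θ, hϑmono, -, hϑsl, -, -, -, hbounds⟩ := Hcoer T hT
  obtain ⟨α, β, hα, hβ, ε, hε, hlip⟩ := Htlip T hT
  set C := max (Θ 0) 0
  refine ⟨α, α * C + β, hα, by positivity, ε, hε, fun s hs lam t₁ ht₁ t₂ ht₂ hdist => ?_⟩
  have hH0 : H s t₂ 0 ≤ C := by
    simpa only [abs_zero] using (hbounds s hs 0 t₂ ht₂).2.trans (le_max_left (Θ |0|) 0)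
  have hbdd := bddAbove_range_mul_sub_of_superlinear hϑmono hϑsl
    (fun μ => (hbounds s hs μ t₂ ht₂).1) lam
  have hswap : ∀ μ, H s t₂ μ - H s t₁ μ ≤ (α * (H s t₁ μ / (1 + |μ|)) + β) * |t₂ - t₁| :=
    fun μ => abs_sub_comm t₁ t₂ ▸ hlip s hs μ t₂ ht₂ t₁ ht₁ (by rwa [abs_sub_comm])
  have hcompare := legendreTransform_le_add_of_sub_le hα hβ (le_max_right _ _) (abs_nonneg _) hH0
    hbdd hswap
  rw [lagrangian_eq_legendreTransform, lagrangian_eq_legendreTransform]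
  linarith

/-- the Lagrangian inherits a Lipschitz-type condition in the time variable. -/
theorem lagrangian_time_lipschitz (ℓ : ℝ) (hℓ : 0 < ℓ) (H : ℝ → ℝ → ℝ → ℝ)
    (Hcont : ContinuousOn (fun p : ℝ × ℝ × ℝ => H p.1 p.2.1 p.2.2)
      (Icc 0 ℓ ×ˢ Ici 0 ×ˢ univ))
    (Hconv : ∀ s ∈ Icc 0 ℓ, ∀ t ∈ Ici (0:ℝ), ConvexOn ℝ univ (fun μ => H s t μ))
    (Hcoer : ∀ T > (0:ℝ), ∃ ϑ Θ : ℝ → ℝ, CoerciveBounds H ℓ T ϑ Θ)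
    (Htlip : ∀ T > (0:ℝ), ∃ α β : ℝ, 0 ≤ α ∧ 0 ≤ β ∧ ∃ ε ∈ Ioc 0 T,
      ∀ s ∈ Icc 0 ℓ, ∀ μ : ℝ, ∀ t₁ ∈ Icc 0 T, ∀ t₂ ∈ Icc 0 T, |t₂ - t₁| < ε →
        H s t₁ μ - H s t₂ μ ≤ (α * (H s t₂ μ / (1 + |μ|)) + β) * |t₂ - t₁|) :
    ∀ T > (0:ℝ), ∃ αh βh : ℝ, 0 ≤ αh ∧ 0 ≤ βh ∧ ∃ εh ∈ Ioc 0 T,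
      ∀ s ∈ Icc 0 ℓ, ∀ lam : ℝ, ∀ t₁ ∈ Icc 0 T, ∀ t₂ ∈ Icc 0 T, |t₂ - t₁| < εh →
        Lagrangian H s lam t₁ - Lagrangian H s lam t₂ ≤ (αh * |lam| + βh) * |t₂ - t₁| :=
  lagrangian_time_lipschitz_general ℓ H Hcoer Htlip
end

section
/- For any continuous ψ, c : [0, ∞) → ℝ and any t ≥ 0, G[ψ, c](t) = min_{r ∈ [0, t]} ( G[ψ, c](r) + ∫_r^t c(τ) dτ ). -/
open Set Filter MeasureTheory intervalIntegral

/-- The operator `G[ψ, c](t) = min_{r ∈ [0, t]} ( ψ(r) + ∫_r^t c(τ) dτ )`. -/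
noncomputable def Gop (ψ c : ℝ → ℝ) (t : ℝ) : ℝ :=
  sInf ((fun r => ψ r + ∫ τ in r..t, c τ) '' Icc 0 t)

lemma Gop_isLeast (ψ c : ℝ → ℝ)
    (hψ : ContinuousOn ψ (Ici 0)) (hc : ContinuousOn c (Ici 0)) (t : ℝ) (ht : 0 ≤ t) :
    IsLeast ((fun r => ψ r + ∫ τ in r..t, c τ) '' Icc 0 t) (Gop ψ c t) := by
  have hsub : Icc (0:ℝ) t ⊆ Ici 0 := fun x hx => hx.1
  have hint : IntegrableOn c (uIcc 0 t) volume := by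
    rw [uIcc_of_le ht]
    exact (hc.mono hsub).integrableOn_Icc
  have hcont : ContinuousOn (fun r => ψ r + ∫ τ in r..t, c τ) (Icc 0 t) := by
    have h1 := continuousOn_primitive_interval_left hint
    rw [uIcc_of_le ht] at h1
    exact (hψ.mono hsub).add h1
  have hne : ((fun r => ψ r + ∫ τ in r..t, c τ) '' Icc 0 t).Nonempty :=
    (nonempty_Icc.mpr ht).image _
  have hcpt : IsCompact ((fun r => ψ r + ∫ τ in r..t, c τ) '' Icc 0 t) :=
    (isCompact_Icc).image_of_continuousOn hcont
  exact ⟨hcpt.sInf_mem hne, fun x hx => csInf_le hcpt.bddBelow hx⟩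

/-- `G[ψ, c](t)` equals (and attains) the minimum over `r ∈ [0, t]` of
`G[ψ, c](r) + ∫_r^t c(τ) dτ`. -/
theorem Gop_dynamic_programming (ψ c : ℝ → ℝ)
    (hψ : ContinuousOn ψ (Ici 0)) (hc : ContinuousOn c (Ici 0)) :
    ∀ t : ℝ, 0 ≤ t →
      IsLeast ((fun r => Gop ψ c r + ∫ τ in r..t, c τ) '' Icc 0 t) (Gop ψ c t) := by
  intro t ht
  have hL := Gop_isLeast ψ c hψ hc t ht
  constructor
  · refine ⟨t, right_mem_Icc.mpr ht, ?_⟩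
    simp
  · rintro x ⟨r, hr, rfl⟩
    have hLr := Gop_isLeast ψ c hψ hc r hr.1
    obtain ⟨s, hs, hval⟩ := hLr.1
    have hst : s ∈ Icc (0:ℝ) t := ⟨hs.1, hs.2.trans hr.2⟩
    have hintable : ∀ a b : ℝ, 0 ≤ a → 0 ≤ b → IntervalIntegrable c volume a b := by
      intro a b ha hb
      apply (hc.mono ?_).intervalIntegrable
      rw [uIcc]
      exact Icc_subset_Ici_self.trans (Ici_subset_Ici.mpr (le_inf ha hb))
    have hadd : (∫ τ in s..r, c τ) + ∫ τ in r..t, c τ = ∫ τ in s..t, c τ :=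
      integral_add_adjacent_intervals (hintable s r hs.1 hr.1) (hintable r t hr.1 ht)
    have : Gop ψ c r + ∫ τ in r..t, c τ = ψ s + ∫ τ in s..t, c τ := by
      rw [← hval, ← hadd]; ring
    show Gop ψ c t ≤ Gop ψ c r + ∫ τ in r..t, c τ
    rw [this]
    exact hL.2 ⟨s, hst, rfl⟩
end

section
/- Fix continuous ψ, c : [0, ∞) → ℝ. Then G[ψ, c] is continuous on [0, ∞), satisfies G[ψ, c] ≤ ψ, and has the property that for every t > 0 and every C¹ supertangent φ to G[ψ, c] at t (i.e. φ(t) = G[ψ, c](t) and G[ψ, c] − φ has a local maximum at t), one has φ'(t) ≤ c(t). Moreover G[ψ, c] is maximal with these properties: if f : [0, ∞) → ℝ is continuous, f ≤ ψ, and φ'(t) ≤ c(t) for every t > 0 and every C¹ supertangent φ to f at t, then f ≤ G[ψ, c] on [0, ∞). -/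
open Set Filter MeasureTheory intervalIntegral Topology

/-!
Put `I(t) = ∫₀ᵗ c`. Splitting `∫_r^t c` at `s` gives `G(t) ≤ G(s) + ∫_s^t c` for `s ≤ t`, i.e.
`G - I` is nonincreasing; conversely, if `f ≤ ψ` and `f - I` is nonincreasing, then
`f(t) ≤ f(r) + ∫_r^t c ≤ ψ(r) + ∫_r^t c` for all `r ≤ t`, so `f ≤ G`.

Shifting test functions by `I` turns the supertangent condition for `(f, c)` into the one for
`(f - I, 0)`, and a continuous `u` satisfies the latter iff it is nonincreasing: if
`u(r) + ε (t - r) < u(t)`, then `u(s) - ε s`, penalised to the right of `t`, attains its maximum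
over `[r, t + 1]` at an interior point, where it has a supertangent of slope at least `ε`.

Continuity of `G` follows by rescaling `[0, t]` to `[0, 1]`.
-/

theorem ContinuousOn.exists_continuous_eqOn_Ici {f : ℝ → ℝ} {a : ℝ} (hf : ContinuousOn f (Ici a)) :
    ∃ g : ℝ → ℝ, Continuous g ∧ EqOn f g (Ici a) :=
  ⟨fun x => f (max x a), hf.comp_continuous (by fun_prop) fun x => le_max_right x a,
    fun x hx => by simp only [max_eq_left (mem_Ici.mp hx)]⟩

theorem continuousOn_sInf_image_Icc {α : Type*} [ConditionallyCompleteLinearOrder α]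
    [TopologicalSpace α] [OrderTopology α] {F : ℝ → ℝ → α} (hF : Continuous (Function.uncurry F)) :
    ContinuousOn (fun t => sInf (F t '' Icc 0 t)) (Ici 0) := by
  have hrescaled : Continuous fun t => sInf ((fun u => F t (u * t)) '' Icc 0 1) :=
    isCompact_Icc.continuous_sInf
      (hF.comp (continuous_fst.prodMk (continuous_snd.mul continuous_fst)))
  refine hrescaled.continuousOn.congr fun t ht => ?_
  have hIcc : Icc 0 t = (fun u => u * t) '' Icc 0 1 := by
    rw [image_mul_right_Icc zero_le_one ht, zero_mul, one_mul]
  simp only [hIcc, image_image]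

theorem deriv_nonpos_of_eventually_le_nhdsLT {φ : ℝ → ℝ} {t : ℝ} (hφ : DifferentiableAt ℝ φ t)
    (h : ∀ᶠ s in 𝓝[<] t, φ t ≤ φ s) : deriv φ t ≤ 0 := by
  refine le_of_tendsto ((hasDerivAt_iff_tendsto_slope.mp hφ.hasDerivAt).mono_left
    (nhdsLT_le_nhdsNE t)) ?_
  filter_upwards [h, self_mem_nhdsWithin] with s hs hst
  rw [slope_def_field]
  exact div_nonpos_of_nonneg_of_nonpos (sub_nonneg.mpr hs) (sub_nonpos.mpr (le_of_lt hst))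

def IsViscositySubsolution (f c : ℝ → ℝ) : Prop :=
  ∀ t : ℝ, 0 < t → ∀ φ : ℝ → ℝ, ContDiff ℝ 1 φ → φ t = f t →
    IsLocalMax (fun τ => f τ - φ τ) t → deriv φ t ≤ c t

namespace IsViscositySubsolution

variable {f g c d : ℝ → ℝ}

theorem congr (h : IsViscositySubsolution f c) (hfg : EqOn f g (Ioi 0)) (hcd : EqOn c d (Ioi 0)) :
    IsViscositySubsolution g d := by
  intro t ht φ hφ hφt hmax
  have hfg_near : f =ᶠ[𝓝 t] g := eventually_of_mem (isOpen_Ioi.mem_nhds ht) hfg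
  rw [← hcd ht]
  refine h t ht φ hφ (hφt.trans (hfg ht).symm) ?_
  exact hmax.congr (hfg_near.mono fun τ hτ => by simp only [hτ])

theorem sub_iff {I : ℝ → ℝ} (hI : ContDiff ℝ 1 I) :
    IsViscositySubsolution (fun t => f t - I t) 0 ↔ IsViscositySubsolution f (deriv I) := by
  have hId := hI.differentiable one_ne_zero
  constructor
  · intro h t ht φ hφ hφt hmax
    have hφd := hφ.differentiable one_ne_zero
    have := h t ht (fun τ => φ τ - I τ) (hφ.sub hI) (by simp only [hφt])
      (by simpa only [sub_sub_sub_cancel_right] using hmax)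
    rw [deriv_fun_sub (hφd t) (hId t)] at this
    simpa [sub_nonpos] using this
  · intro h t ht φ hφ hφt hmax
    have hφd := hφ.differentiable one_ne_zero
    have := h t ht (fun τ => φ τ + I τ) (hφ.add hI) (by simp only [hφt, sub_add_cancel])
      (by convert hmax using 2; ring)
    rw [deriv_fun_add (hφd t) (hId t)] at this
    simpa using this

variable {u : ℝ → ℝ}

theorem le_add_mul_sub (hu : ContinuousOn u (Ici 0)) (h : IsViscositySubsolution u 0)
    {r t ε : ℝ} (hr : 0 ≤ r) (hrt : r ≤ t) (hε : 0 < ε) : u t ≤ u r + ε * (t - r) := by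
  by_contra! hlt
  -- `K` makes `V (t + 1) < V t`, so `V` is maximised on `[r, t + 1]` at an interior point.
  set K : ℝ := max (u (t + 1) - u t) 0
  set φ₀ : ℝ → ℝ := fun s => ε * s + K * Real.smoothTransition (s - t)
  set V : ℝ → ℝ := fun s => u s - φ₀ s
  have hφ₀ : ContDiff ℝ 1 φ₀ :=
    (contDiff_const.mul contDiff_id).add
      (contDiff_const.mul (Real.smoothTransition.contDiff.comp (contDiff_id.sub contDiff_const)))
  have hφ₀' (s : ℝ) : ε ≤ deriv φ₀ s := by
    have hST := ((Real.smoothTransition.contDiff (n := 1)).differentiable one_ne_zero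
      (s - t)).hasDerivAt.comp_sub_const s t
    have hd : HasDerivAt φ₀ (ε * 1 + K * deriv Real.smoothTransition (s - t)) s :=
      ((hasDerivAt_id s).const_mul ε).add (hST.const_mul K)
    rw [hd.deriv, mul_one, le_add_iff_nonneg_right]
    exact mul_nonneg (le_max_right _ _) Real.smoothTransition.monotone.deriv_nonneg
  obtain ⟨s, hs, hsmax⟩ :=
    isCompact_Icc.exists_isMaxOn (nonempty_Icc.mpr (by linarith : r ≤ t + 1))
      ((hu.sub hφ₀.continuous.continuousOn).mono fun x hx => (hr.trans hx.1 : (0 : ℝ) ≤ x))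
  have hVr : V r < V t := by
    simp only [V, φ₀, Real.smoothTransition.zero_of_nonpos (sub_nonpos.mpr hrt), sub_self,
      Real.smoothTransition.zero]
    linarith
  have hVt1 : V (t + 1) < V t := by
    simp only [V, φ₀, add_sub_cancel_left, Real.smoothTransition.one, sub_self,
      Real.smoothTransition.zero]
    linarith [le_max_left (u (t + 1) - u t) 0]
  have hVs : V t ≤ V s := hsmax ⟨hrt, by linarith⟩
  have hs' : s ∈ Ioo r (t + 1) :=
    ⟨lt_of_le_of_ne hs.1 (by rintro rfl; linarith), lt_of_le_of_ne hs.2 (by rintro rfl; linarith)⟩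
  have hmax : IsLocalMax (fun τ => u τ - (φ₀ τ + V s)) s := by
    filter_upwards [isOpen_Ioo.mem_nhds hs'] with τ hτ
    have : V τ ≤ V s := hsmax (Ioo_subset_Icc_self hτ)
    simp only [V] at this ⊢
    linarith
  have := h s (hr.trans_lt hs'.1) (fun τ => φ₀ τ + V s) (hφ₀.add contDiff_const)
    (by simp only [V]; ring) hmax
  rw [deriv_add_const, Pi.zero_apply] at this
  linarith [hφ₀' s]

theorem antitoneOn (hu : ContinuousOn u (Ici 0)) (h : IsViscositySubsolution u 0) :
    AntitoneOn u (Ici 0) := by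
  intro r hr t _ hrt
  refine le_of_forall_pos_le_add fun ε hε => ?_
  have hpos : 0 < t - r + 1 := by linarith
  calc u t ≤ u r + ε / (t - r + 1) * (t - r) := h.le_add_mul_sub hu hr hrt (div_pos hε hpos)
    _ ≤ u r + ε := by
      rw [div_mul_eq_mul_div, add_le_add_iff_left, div_le_iff₀ hpos]
      nlinarith

end IsViscositySubsolution

theorem AntitoneOn.isViscositySubsolution {u : ℝ → ℝ} (hu : AntitoneOn u (Ici 0)) :
    IsViscositySubsolution u 0 := by
  intro t ht φ hφ hφt hmax
  apply deriv_nonpos_of_eventually_le_nhdsLT ((hφ.differentiable one_ne_zero) t)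
  filter_upwards [nhdsWithin_le_nhds hmax, nhdsWithin_le_nhds (Ioi_mem_nhds ht),
    self_mem_nhdsWithin] with s hs hs0 hst
  have : u t ≤ u s := hu (Ioi_subset_Ici_self hs0) (Ioi_subset_Ici_self ht) (le_of_lt hst)
  linarith

theorem isViscositySubsolution_iff_antitoneOn_sub_integral {f c : ℝ → ℝ} (hc : Continuous c)
    (hf : ContinuousOn f (Ici 0)) :
    IsViscositySubsolution f c ↔ AntitoneOn (fun t => f t - ∫ τ in 0..t, c τ) (Ici 0) := by
  have hIc : deriv (fun t => ∫ τ in 0..t, c τ) = c := funext (hc.deriv_integral c 0)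
  have hI : ContDiff ℝ 1 (fun t => ∫ τ in 0..t, c τ) :=
    contDiff_one_iff_deriv.mpr
      ⟨fun t => (hc.integral_hasStrictDerivAt 0 t).hasDerivAt.differentiableAt,
        by rw [hIc]; exact hc⟩
  have hsub := IsViscositySubsolution.sub_iff (f := f) hI
  rw [hIc] at hsub
  exact hsub.symm.trans ⟨fun h => h.antitoneOn (hf.sub hI.continuous.continuousOn),
    AntitoneOn.isViscositySubsolution⟩

section Gop

variable {ψ c : ℝ → ℝ} {r s t : ℝ}

theorem continuous_Gop_integrand (hψ : Continuous ψ) (hc : Continuous c) :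
    Continuous fun p : ℝ × ℝ => ψ p.2 + ∫ τ in p.2..p.1, c τ := by
  have hsplit : (fun p : ℝ × ℝ => ψ p.2 + ∫ τ in p.2..p.1, c τ) =
      fun p => ψ p.2 + ((∫ τ in 0..p.1, c τ) - ∫ τ in 0..p.2, c τ) := by
    ext p
    rw [integral_interval_sub_left (hc.intervalIntegrable 0 _) (hc.intervalIntegrable 0 _)]
  rw [hsplit]
  fun_prop

theorem continuousOn_Gop (hψ : Continuous ψ) (hc : Continuous c) :
    ContinuousOn (Gop ψ c) (Ici 0) :=
  continuousOn_sInf_image_Icc (F := fun t r => ψ r + ∫ τ in r..t, c τ)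
    (continuous_Gop_integrand hψ hc)

theorem Gop_le_add_integral (hψ : Continuous ψ) (hc : Continuous c) (hr : r ∈ Icc 0 t) :
    Gop ψ c t ≤ ψ r + ∫ τ in r..t, c τ :=
  csInf_le (isCompact_Icc.image ((continuous_Gop_integrand hψ hc).comp
    (Continuous.prodMk_right t))).bddBelow (mem_image_of_mem _ hr)

theorem Gop_le_self (hψ : Continuous ψ) (hc : Continuous c) (ht : 0 ≤ t) : Gop ψ c t ≤ ψ t := by
  simpa using Gop_le_add_integral hψ hc ⟨ht, le_rfl⟩

theorem Gop_le_Gop_add_integral (hψ : Continuous ψ) (hc : Continuous c) (hs : 0 ≤ s)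
    (hst : s ≤ t) : Gop ψ c t ≤ Gop ψ c s + ∫ τ in s..t, c τ := by
  rw [← sub_le_iff_le_add]
  refine le_csInf ((nonempty_Icc.mpr hs).image _) ?_
  rintro _ ⟨r, hr, rfl⟩
  have := Gop_le_add_integral hψ hc ⟨hr.1, hr.2.trans hst⟩
  rw [← integral_add_adjacent_intervals (hc.intervalIntegrable r s)
    (hc.intervalIntegrable s t)] at this
  linarith

theorem antitoneOn_Gop_sub_integral (hψ : Continuous ψ) (hc : Continuous c) :
    AntitoneOn (fun t => Gop ψ c t - ∫ τ in 0..t, c τ) (Ici 0) := by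
  intro s hs t _ hst
  have := Gop_le_Gop_add_integral hψ hc hs hst
  dsimp only
  rw [← integral_add_adjacent_intervals (hc.intervalIntegrable 0 s) (hc.intervalIntegrable s t)]
  linarith

theorem le_Gop_of_antitoneOn_sub_integral (hc : Continuous c) {f : ℝ → ℝ}
    (hfψ : ∀ t, 0 ≤ t → f t ≤ ψ t) (hf : AntitoneOn (fun t => f t - ∫ τ in 0..t, c τ) (Ici 0))
    (ht : 0 ≤ t) : f t ≤ Gop ψ c t := by
  refine le_csInf ((nonempty_Icc.mpr ht).image _) ?_
  rintro _ ⟨r, hr, rfl⟩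
  have := hf hr.1 ht hr.2
  dsimp only at this ⊢
  rw [← integral_add_adjacent_intervals (hc.intervalIntegrable 0 r) (hc.intervalIntegrable r t)]
    at this
  linarith [hfψ r hr.1]

theorem Gop_congr {ψ' c' : ℝ → ℝ} (hψ : EqOn ψ ψ' (Ici 0)) (hc : EqOn c c' (Ici 0)) :
    EqOn (Gop ψ c) (Gop ψ' c') (Ici 0) := by
  intro t _
  refine congrArg sInf (image_congr fun r hr => ?_)
  rw [hψ hr.1, integral_congr fun τ hτ => hc ?_]
  rw [uIcc_of_le hr.2] at hτ
  exact hr.1.trans hτ.1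

end Gop

/-- `G[ψ, c]` is the maximal continuous function on `[0, ∞)` bounded above by
`ψ` whose C¹ supertangents `φ` at any `t > 0` satisfy `φ'(t) ≤ c(t)`. -/
theorem Gop_maximal (ψ c : ℝ → ℝ)
    (hψ : ContinuousOn ψ (Ici 0)) (hc : ContinuousOn c (Ici 0)) :
    -- `G[ψ, c]` is continuous on `[0, ∞)`
    ContinuousOn (Gop ψ c) (Ici 0) ∧
    -- `G[ψ, c] ≤ ψ`
    (∀ t : ℝ, 0 ≤ t → Gop ψ c t ≤ ψ t) ∧
    -- supertangent property: `φ'(t) ≤ c(t)` for any C¹ supertangent `φ` at `t > 0`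
    (∀ t : ℝ, 0 < t → ∀ φ : ℝ → ℝ, ContDiff ℝ 1 φ → φ t = Gop ψ c t →
      IsLocalMax (fun τ => Gop ψ c τ - φ τ) t → deriv φ t ≤ c t) ∧
    -- maximality
    (∀ f : ℝ → ℝ, ContinuousOn f (Ici 0) → (∀ t : ℝ, 0 ≤ t → f t ≤ ψ t) →
      (∀ t : ℝ, 0 < t → ∀ φ : ℝ → ℝ, ContDiff ℝ 1 φ → φ t = f t →
        IsLocalMax (fun τ => f τ - φ τ) t → deriv φ t ≤ c t) →
      ∀ t : ℝ, 0 ≤ t → f t ≤ Gop ψ c t) := by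
  obtain ⟨ψ', hψ', hψψ'⟩ := hψ.exists_continuous_eqOn_Ici
  obtain ⟨c', hc', hcc'⟩ := hc.exists_continuous_eqOn_Ici
  have hG : EqOn (Gop ψ c) (Gop ψ' c') (Ici 0) := Gop_congr hψψ' hcc'
  refine ⟨(continuousOn_Gop hψ' hc').congr hG, fun t ht => ?_, ?_, fun f hf hfψ hsub t ht => ?_⟩
  · rw [hG ht, hψψ' ht]
    exact Gop_le_self hψ' hc' ht
  · have hGsub : IsViscositySubsolution (Gop ψ' c') c' :=
      (isViscositySubsolution_iff_antitoneOn_sub_integral hc' (continuousOn_Gop hψ' hc')).mpr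
        (antitoneOn_Gop_sub_integral hψ' hc')
    exact hGsub.congr (hG.symm.mono Ioi_subset_Ici_self) (hcc'.symm.mono Ioi_subset_Ici_self)
  · have hfsub : IsViscositySubsolution f c' :=
      IsViscositySubsolution.congr hsub (eqOn_refl f _) (hcc'.mono Ioi_subset_Ici_self)
    rw [hG ht]
    exact le_Gop_of_antitoneOn_sub_integral hc' (fun s hs => (hfψ s hs).trans_eq (hψψ' hs))
      ((isViscositySubsolution_iff_antitoneOn_sub_integral hc' hf).mp hfsub) ht
end

section
/- Fix continuous ψ, c : [0, ∞) → ℝ. Let f : [0, ∞) → ℝ be continuous with f(0) ≥ ψ(0), and suppose that f(t) ≥ ψ(t) for every t > 0 at which there exists a C¹ subtangent φ to f (i.e. φ(t) = f(t) and f − φ has a local minimum at t) with φ'(t) < c(t). Then f ≥ G[ψ, c] on [0, ∞). -/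
open Set Filter MeasureTheory intervalIntegral

/-!
Subtracting a `C¹` primitive `C` of `c` reduces the claim to `c = 0`: for `F = f - C`
and `Ψ = ψ - C` one must show `F t ≥ min_{[0, t]} Ψ`, knowing that `F s ≥ Ψ s` wherever `F`
has a `C¹` subtangent of negative slope. If this failed, then `F t + ε t < Ψ` on `[0, t]` for some
`ε > 0`, and by continuity `F < Ψ` also on a short interval `(t, T]`. Minimise
`F s + ε s + K q s` over `[0, T]`, where `q` is smooth, vanishes on `(-∞, t]` and is positive
after `t`, and `K` is so large that the minimum is not attained at `T`; `F 0 ≥ Ψ 0` excludes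
the minimum at `0`. At the interior minimiser `s` the function `F` has a subtangent of slope at
most `-ε`, yet `F s < Ψ s`.
-/

theorem exists_contDiff_primitive {c : ℝ → ℝ} (hc : ContinuousOn c (Ici 0)) :
    ∃ C : ℝ → ℝ, ContDiff ℝ 1 C ∧ (∀ s, 0 ≤ s → deriv C s = c s) ∧
      ∀ r t, 0 ≤ r → 0 ≤ t → ∫ τ in r..t, c τ = C t - C r := by
  set c' : ℝ → ℝ := fun τ => c (max τ 0)
  have hc' : Continuous c' :=
    hc.comp_continuous (continuous_id.max continuous_const) fun τ => le_max_right τ 0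
  have hderiv : deriv (fun x => ∫ τ in (0 : ℝ)..x, c' τ) = c' :=
    funext (hc'.deriv_integral c' 0)
  refine ⟨fun x => ∫ τ in (0 : ℝ)..x, c' τ, ?_, fun s hs => by simp [hderiv, c', hs],
    fun r t hr ht => ?_⟩
  · rw [contDiff_one_iff_deriv, hderiv]
    exact ⟨fun x => (hc'.integral_hasStrictDerivAt 0 x).hasDerivAt.differentiableAt, hc'⟩
  · rw [integral_interval_sub_left (hc'.intervalIntegrable _ _) (hc'.intervalIntegrable _ _)]
    refine integral_congr fun τ hτ => ?_
    have hτ0 : 0 ≤ τ := (le_min hr ht).trans hτ.1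
    simp [c', hτ0]

theorem Gop_le {ψ c : ℝ → ℝ} {r t : ℝ} (hψ : ContinuousOn ψ (Icc 0 t))
    (hc : IntegrableOn c (Icc 0 t)) (hr : r ∈ Icc 0 t) :
    Gop ψ c t ≤ ψ r + ∫ τ in r..t, c τ := by
  have hcont : ContinuousOn (fun r => ψ r + ∫ τ in r..t, c τ) (Icc 0 t) := by
    rw [← uIcc_of_le (hr.1.trans hr.2)] at hψ hc ⊢
    exact hψ.add (continuousOn_primitive_interval_left hc)
  exact csInf_le (isCompact_Icc.image_of_continuousOn hcont).bddBelow (mem_image_of_mem _ hr)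

def HasSubtangentDerivLt (f : ℝ → ℝ) (t a : ℝ) : Prop :=
  ∃ φ : ℝ → ℝ, ContDiff ℝ 1 φ ∧ φ t = f t ∧ IsLocalMin (fun τ => f τ - φ τ) t ∧
    deriv φ t < a

namespace HasSubtangentDerivLt

variable {f g : ℝ → ℝ} {t a : ℝ}

theorem of_isLocalMin_add (hmin : IsLocalMin (fun τ => f τ + g τ) t) (hg : ContDiff ℝ 1 g)
    (ha : -deriv g t < a) : HasSubtangentDerivLt f t a := by
  refine ⟨fun τ => f t + g t - g τ, contDiff_const.sub hg, by ring, ?_, ?_⟩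
  · exact hmin.mono fun τ hτ => by linarith
  · rwa [((hg.differentiable one_ne_zero t).hasDerivAt.const_sub (f t + g t)).deriv]

theorem of_sub (h : HasSubtangentDerivLt (fun τ => f τ - g τ) t a) (hg : ContDiff ℝ 1 g) :
    HasSubtangentDerivLt f t (a + deriv g t) := by
  obtain ⟨φ, hφ, hφt, hmin, hderiv⟩ := h
  refine ⟨fun τ => φ τ + g τ, hφ.add hg, by simp [hφt], ?_, ?_⟩
  · convert hmin using 1
    ext τ
    ring
  · have hd : HasDerivAt (fun τ => φ τ + g τ) (deriv φ t + deriv g t) t :=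
      (hφ.differentiable one_ne_zero t).hasDerivAt.add (hg.differentiable one_ne_zero t).hasDerivAt
    rw [hd.deriv]
    linarith

end HasSubtangentDerivLt

theorem exists_hasSubtangentDerivLt_zero_of_lt {F Ψ : ℝ → ℝ} {t ε : ℝ}
    (hF : ContinuousOn F (Ici 0)) (hΨ : ContinuousAt Ψ t) (h0 : Ψ 0 ≤ F 0) (ht : 0 < t)
    (hε : 0 < ε) (hlt : ∀ r ∈ Icc 0 t, F t + ε * t < Ψ r) :
    ∃ s, 0 < s ∧ F s < Ψ s ∧ HasSubtangentDerivLt F s 0 := by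
  obtain ⟨T, hTt, hT⟩ : ∃ T ∈ Ioi t, Ioc t T ⊆ {s | F s < Ψ s} := by
    have hFt : F t < Ψ t := by linarith [hlt t ⟨ht.le, le_rfl⟩, mul_pos hε ht]
    exact mem_nhdsGT_iff_exists_Ioc_subset.1 <| nhdsWithin_le_nhds <|
      (hF.continuousAt (Ici_mem_nhds ht)).eventually_lt hΨ hFt
  set q : ℝ → ℝ := fun s => expNegInvGlue (s - t)
  have hq : ContDiff ℝ 1 q := expNegInvGlue.contDiff.comp (contDiff_id.sub contDiff_const)
  have hq_mono : Monotone q := expNegInvGlue.monotone.comp fun _ _ h => sub_le_sub_right h t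
  have hq_le : ∀ s ≤ t, q s = 0 := fun s hs => expNegInvGlue.zero_of_nonpos (by linarith)
  have hqT : 0 < q T := expNegInvGlue.pos_of_pos (sub_pos.2 hTt)
  obtain ⟨K, hK⟩ := exists_nat_gt ((F t - F T) / q T)
  rw [div_lt_iff₀ hqT] at hK
  set g : ℝ → ℝ := fun s => ε * s + K * q s
  have hg : ContDiff ℝ 1 g := (contDiff_const.mul contDiff_id).add (contDiff_const.mul hq)
  obtain ⟨s, hs, hmin⟩ := isCompact_Icc.exists_isMinOn (nonempty_Icc.2 (ht.le.trans hTt.le))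
    ((hF.mono Icc_subset_Ici_self).add hg.continuous.continuousOn)
  have hs_le : F s + g s ≤ F t + ε * t := by
    simpa [g, hq_le t le_rfl] using hmin ⟨ht.le, hTt.le⟩
  have hs0 : 0 < s := by
    refine hs.1.lt_of_ne fun h => ?_
    subst h
    simp only [g, hq_le 0 ht.le, mul_zero, add_zero] at hs_le
    linarith [hlt 0 ⟨le_rfl, ht.le⟩]
  have hsT : s < T := by
    refine hs.2.lt_of_ne fun h => ?_
    subst h
    linarith [mul_lt_mul_of_pos_left hTt hε]
  refine ⟨s, hs0, ?_, .of_isLocalMin_add (hmin.isLocalMin (Icc_mem_nhds hs0 hsT)) hg ?_⟩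
  · rcases le_or_gt s t with hst | hts
    · simp only [g, hq_le s hst, mul_zero, add_zero] at hs_le
      linarith [hlt s ⟨hs0.le, hst⟩, mul_pos hε hs0]
    · exact hT ⟨hts, hsT.le⟩
  · have hg' : HasDerivAt g (ε * 1 + K * deriv q s) s :=
      ((hasDerivAt_id s).const_mul ε).add
        ((hq.differentiable one_ne_zero s).hasDerivAt.const_mul (K : ℝ))
    rw [hg'.deriv]
    linarith [mul_nonneg K.cast_nonneg (hq_mono.deriv_nonneg (x := s))]

theorem exists_le_of_hasSubtangentDerivLt {F Ψ : ℝ → ℝ} {t : ℝ}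
    (hF : ContinuousOn F (Ici 0)) (hΨ : ContinuousOn Ψ (Ici 0)) (h0 : Ψ 0 ≤ F 0)
    (hsub : ∀ s, 0 < s → HasSubtangentDerivLt F s 0 → Ψ s ≤ F s) (ht : 0 ≤ t) :
    ∃ r ∈ Icc 0 t, Ψ r ≤ F t := by
  rcases ht.eq_or_lt with rfl | ht
  · exact ⟨0, ⟨le_rfl, le_rfl⟩, h0⟩
  by_contra! hlt
  obtain ⟨m, hm, hmin⟩ :=
    isCompact_Icc.exists_isMinOn (nonempty_Icc.2 ht.le) (hΨ.mono Icc_subset_Ici_self)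
  have hgap : 0 < Ψ m - F t := sub_pos.2 (hlt m hm)
  have hεt : (Ψ m - F t) / (2 * t) * t = (Ψ m - F t) / 2 := by field_simp
  obtain ⟨s, hs, hFΨ, hφ⟩ := exists_hasSubtangentDerivLt_zero_of_lt
    (ε := (Ψ m - F t) / (2 * t)) hF
    (hΨ.continuousAt (Ici_mem_nhds ht)) h0 ht (div_pos hgap (by linarith)) fun r hr => by
      linarith [isMinOn_iff.1 hmin r hr]
  exact (hsub s hs hφ).not_gt hFΨ

/-- if `f(0) ≥ ψ(0)` and `f(t) ≥ ψ(t)` at every `t > 0` admitting a C¹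
subtangent `φ` to `f` with `φ'(t) < c(t)`, then `f ≥ G[ψ, c]` on `[0, ∞)`. -/
theorem Gop_lower_bound (ψ c : ℝ → ℝ)
    (hψ : ContinuousOn ψ (Ici 0)) (hc : ContinuousOn c (Ici 0))
    (f : ℝ → ℝ) (hf : ContinuousOn f (Ici 0))
    (h0 : ψ 0 ≤ f 0)
    (hsub : ∀ t : ℝ, 0 < t →
      (∃ φ : ℝ → ℝ, ContDiff ℝ 1 φ ∧ φ t = f t ∧
        IsLocalMin (fun τ => f τ - φ τ) t ∧ deriv φ t < c t) →
      ψ t ≤ f t) :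
    ∀ t : ℝ, 0 ≤ t → Gop ψ c t ≤ f t := by
  intro t ht
  obtain ⟨C, hC, hC', hCint⟩ := exists_contDiff_primitive hc
  obtain ⟨r, hr, hψr⟩ := exists_le_of_hasSubtangentDerivLt (F := fun τ => f τ - C τ)
    (Ψ := fun τ => ψ τ - C τ) (hf.sub hC.continuous.continuousOn)
    (hψ.sub hC.continuous.continuousOn) (sub_le_sub_right h0 _)
    (fun s hs hφ => by
      have hfs := hφ.of_sub hC
      rw [zero_add, hC' s hs.le] at hfs
      linarith [hsub s hs hfs]) ht
  calc Gop ψ c t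
      ≤ ψ r + ∫ τ in r..t, c τ :=
        Gop_le (hψ.mono Icc_subset_Ici_self) (hc.mono Icc_subset_Ici_self).integrableOn_Icc hr
    _ = ψ r - C r + C t := by rw [hCint r t hr.1 ht]; ring
    _ ≤ f t := by linarith
end

section
/- Let f : [a, b] → ℝ be continuous and suppose that for every t ∈ (a, b) and every C¹ function ψ that is a supertangent to f at t (i.e. ψ(t) = f(t) and f − ψ has a local maximum at t), one has ψ'(t) ≤ 0. Then f is nonincreasing on [a, b]. -/
open Set Filter

/-!
If `f x < f y` for some `x < y`, continuity gives `x < y' < y` with `f x < f y'`. Subtracting a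
steep increasing exponential `φ` that rises by less than `f y' - f x` on `[x, y']` but by more
than `f y - f y'` on `[y', y]` makes `f - φ` peak strictly inside `(x, y)`; there `φ`, shifted to
touch `f`, is a C¹ supertangent with positive derivative.
-/

lemma exists_isLocalMax_mem_Ioo {g : ℝ → ℝ} {x y z : ℝ} (hg : ContinuousOn g (Icc x z))
    (hxy : x ≤ y) (hyz : y ≤ z) (hx : g x < g y) (hz : g z < g y) :
    ∃ t ∈ Ioo x z, IsLocalMax g t := by
  obtain ⟨t, ht, hmax⟩ := isCompact_Icc.exists_isMaxOn (nonempty_Icc.mpr (hxy.trans hyz)) hg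
  have hyt : g y ≤ g t := hmax ⟨hxy, hyz⟩
  have htx : x ≠ t := by rintro rfl; linarith
  have htz : t ≠ z := by rintro rfl; linarith
  have ht' : t ∈ Ioo x z := ⟨lt_of_le_of_ne ht.1 htx, lt_of_le_of_ne ht.2 htz⟩
  exact ⟨t, ht', hmax.isLocalMax (Icc_mem_nhds ht'.1 ht'.2)⟩

lemma exists_exp_tilt {x y z u v w : ℝ} (hyz : y < z) (huv : u < v) :
    ∃ K > 0, ∃ s > 0, u - K * Real.exp (s * (x - y)) < v - K ∧
      w - K * Real.exp (s * (z - y)) < v - K := by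
  set K := (v - u) / 2
  have hK : 0 < K := by positivity
  have hzy : 0 < z - y := sub_pos.mpr hyz
  set s := (|w - v| + 1) / (K * (z - y))
  have hs : 0 < s := by positivity
  refine ⟨K, hK, s, hs, ?_, ?_⟩
  · have : 0 < K * Real.exp (s * (x - y)) := by positivity
    linarith [show 2 * K = v - u by simp only [K]; ring]
  · have hKs : K * (s * (z - y)) = |w - v| + 1 := by
      simp only [s]; field_simp
    have hexp : K * (s * (z - y) + 1) ≤ K * Real.exp (s * (z - y)) :=
      mul_le_mul_of_nonneg_left (Real.add_one_le_exp _) hK.le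
    linarith [le_abs_self (w - v)]

lemma exists_supertangent_deriv_pos {f : ℝ → ℝ} {x y z : ℝ} (hf : ContinuousOn f (Icc x z))
    (hxy : x ≤ y) (hyz : y < z) (hfxy : f x < f y) :
    ∃ t ∈ Ioo x z, ∃ ψ : ℝ → ℝ, ContDiff ℝ 1 ψ ∧ ψ t = f t ∧
      IsLocalMax (fun τ => f τ - ψ τ) t ∧ 0 < deriv ψ t := by
  obtain ⟨K, hK, s, hs, hx, hz⟩ := exists_exp_tilt (x := x) (w := f z) hyz hfxy
  set φ : ℝ → ℝ := fun τ => K * Real.exp (s * (τ - y))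
  have hφ : ContDiff ℝ 1 φ := by fun_prop
  have hφ' : ∀ τ, HasDerivAt φ (K * (Real.exp (s * (τ - y)) * s)) τ := fun τ => by
    simpa using (((hasDerivAt_id τ).sub_const y).const_mul s).exp.const_mul K
  have hg : ContinuousOn (fun τ => f τ - φ τ) (Icc x z) := hf.sub hφ.continuous.continuousOn
  have hy : f y - φ y = f y - K := by simp [φ]
  obtain ⟨t, ht, hmax : IsLocalMax (fun τ => f τ - φ τ) t⟩ :=
    exists_isLocalMax_mem_Ioo hg hxy hyz.le (by simpa [hy] using hx) (by simpa [hy] using hz)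
  refine ⟨t, ht, fun τ => φ τ + (f t - φ t), hφ.add contDiff_const, by ring, ?_, ?_⟩
  · simpa only [sub_add_eq_sub_sub] using hmax.sub (isLocalMin_const (b := f t - φ t))
  · rw [((hφ' t).add_const _).deriv]
    positivity

theorem nonincreasing_of_supertangents_general (a b : ℝ) (f : ℝ → ℝ)
    (hf : ContinuousOn f (Icc a b))
    (hsup : ∀ t ∈ Ioo a b, ∀ ψ : ℝ → ℝ, ContDiff ℝ 1 ψ → ψ t = f t →
      IsLocalMax (fun τ => f τ - ψ τ) t → deriv ψ t ≤ 0) :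
    AntitoneOn f (Icc a b) := by
  intro x hx y hy hxy
  by_contra! hlt
  have hxy' : x < y := hxy.lt_of_ne (ne_of_apply_ne f hlt.ne)
  have hsub : Icc x y ⊆ Icc a b := Icc_subset_Icc hx.1 hy.2
  have : NeBot (nhdsWithin y (Ioo x y)) := right_nhdsWithin_Ioo_neBot hxy'
  obtain ⟨y', hfy', hy'⟩ :=
    ((((hf y hy).mono (Ioo_subset_Icc_self.trans hsub)).eventually_const_lt hlt).and
      self_mem_nhdsWithin).exists
  obtain ⟨t, ht, ψ, hψ, hψt, hmax, hderiv⟩ :=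
    exists_supertangent_deriv_pos (hf.mono hsub) hy'.1.le hy'.2 hfy'
  exact (hsup t (Ioo_subset_Ioo hx.1 hy.2 ht) ψ hψ hψt hmax).not_gt hderiv

/-- a continuous function on `[a, b]` whose C¹ supertangents at interior
points all have nonpositive derivative is nonincreasing on `[a, b]`. -/
theorem nonincreasing_of_supertangents (a b : ℝ) (hab : a < b) (f : ℝ → ℝ)
    (hf : ContinuousOn f (Icc a b))
    (hsup : ∀ t ∈ Ioo a b, ∀ ψ : ℝ → ℝ, ContDiff ℝ 1 ψ → ψ t = f t →
      IsLocalMax (fun τ => f τ - ψ τ) t → deriv ψ t ≤ 0) :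
    AntitoneOn f (Icc a b) :=
  nonincreasing_of_supertangents_general a b f hf hsup
end

section
/- Fix T > 0 and constants A ∈ ℝ, C ≥ 0. Let ϑ* be the convex conjugate of Θ̄_T and Θ* the convex conjugate of ϑ̄_T (so that ϑ*(|p|) ≤ L*(s, p, t) ≤ Θ*(|p|) for the conjugate L* of L in the speed variable). Then there exists R > 0 such that sup { Θ*(|p|) : p is a subgradient of λ ↦ L(s, λ, t) at q, for some s ∈ [0, ℓ], t ∈ [0, T], |q| ≤ C } + A ≤ inf { ϑ*(|p|) : p is a subgradient of λ ↦ L(s, λ, t) at q, for some s ∈ [0, ℓ], t ∈ [0, T], |q| > R }. Here p is a subgradient of λ ↦ L(s, λ, t) at q if L(s, λ, t) ≥ L(s, q, t) + p(λ − q) for all λ ∈ ℝ. -/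
open Set Filter

/-- Convex conjugate over the nonnegative half line: `f*(r) = sup_{m ≥ 0} (r m − f m)`. -/
noncomputable def conjHalf (f : ℝ → ℝ) (r : ℝ) : ℝ :=
  sSup ((fun m => r * m - f m) '' Ici 0)

/-- `p` is a subgradient of `λ ↦ L(s, λ, t)` at `q`. -/
def IsSubgradientAt (L : ℝ → ℝ → ℝ → ℝ) (s t q p : ℝ) : Prop :=
  ∀ lam : ℝ, L s q t + p * (lam - q) ≤ L s lam t

lemma superlinear_bdd {f : ℝ → ℝ} (hmono : MonotoneOn f (Ici 0)) (hsl : Superlinear f)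
    {r : ℝ} (hr : 0 ≤ r) : BddAbove ((fun m => r * m - f m) '' Ici 0) := by
  obtain ⟨a, ha⟩ := eventually_atTop.mp (tendsto_atTop.mp hsl (r + 1))
  set M := max a 1 with hM
  refine ⟨max 0 (r * M - f 0), ?_⟩
  rintro x ⟨m, hm', rfl⟩
  have hm : (0:ℝ) ≤ m := hm'
  by_cases h : m ≤ M
  · have h1 : r * m ≤ r * M := mul_le_mul_of_nonneg_left h hr
    have h2 : f 0 ≤ f m := hmono (mem_Ici.mpr le_rfl) hm' hm
    have : r * m - f m ≤ r * M - f 0 := by linarith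
    exact this.trans (le_max_right _ _)
  · push_neg at h
    have hm1 : (1:ℝ) ≤ m := le_trans (le_max_right a 1) h.le
    have hma : a ≤ m := le_trans (le_max_left a 1) h.le
    have hfm : (r + 1) * m ≤ f m := (le_div_iff₀ (by linarith)).mp (ha m hma)
    have : r * m - f m ≤ 0 := by nlinarith
    exact this.trans (le_max_left _ _)

/-- separation of the dual bounds of subgradients at small and large speeds
(Lemma `dualbound` of the paper). Here `ϑ* = conjHalf Θ̄_T` and `Θ* = conjHalf ϑ̄_T`. -/
theorem dual_bound_separation (ℓ : ℝ) (hℓ : 0 < ℓ) (L : ℝ → ℝ → ℝ → ℝ)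
    (Lcont : ContinuousOn (fun p : ℝ × ℝ × ℝ => L p.1 p.2.1 p.2.2)
      (Icc 0 ℓ ×ˢ (univ : Set ℝ) ×ˢ Ici 0))
    (Lconv : ∀ s ∈ Icc 0 ℓ, ∀ t ∈ Ici (0:ℝ), ConvexOn ℝ univ (fun lam => L s lam t))
    (T : ℝ) (hT : 0 < T) (ϑbar Θbar : ℝ → ℝ)
    (hϑ : MonotoneOn ϑbar (Ici 0) ∧ ConvexOn ℝ (Ici 0) ϑbar ∧ Superlinear ϑbar)
    (hΘ : MonotoneOn Θbar (Ici 0) ∧ ConvexOn ℝ (Ici 0) Θbar ∧ Superlinear Θbar)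
    (hbound : ∀ s ∈ Icc 0 ℓ, ∀ lam : ℝ, ∀ t ∈ Icc 0 T,
      ϑbar |lam| ≤ L s lam t ∧ L s lam t ≤ Θbar |lam|)
    (A C : ℝ) (hC : 0 ≤ C) :
    ∃ R > (0:ℝ),
      ∀ s₁ ∈ Icc 0 ℓ, ∀ t₁ ∈ Icc 0 T, ∀ q₁ p₁ : ℝ, |q₁| ≤ C →
        IsSubgradientAt L s₁ t₁ q₁ p₁ →
      ∀ s₂ ∈ Icc 0 ℓ, ∀ t₂ ∈ Icc 0 T, ∀ q₂ p₂ : ℝ, R < |q₂| →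
        IsSubgradientAt L s₂ t₂ q₂ p₂ →
        conjHalf ϑbar |p₁| + A ≤ conjHalf Θbar |p₂| := by
  obtain ⟨ϑmono, -, ϑsl⟩ := hϑ
  obtain ⟨Θmono, -, Θsl⟩ := hΘ
  have hle : ∀ m : ℝ, ϑbar |m| ≤ Θbar |m| := fun m => by
    have h := hbound 0 ⟨le_refl 0, hℓ.le⟩ m 0 ⟨le_refl 0, hT.le⟩
    linarith [h.1, h.2]
  have hP₁0 : 0 ≤ Θbar (C + 1) - ϑbar 0 := by
    have h1 : ϑbar 0 ≤ ϑbar (C + 1) :=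
      ϑmono (mem_Ici.mpr le_rfl) (mem_Ici.mpr (by linarith)) (by linarith)
    have h2 := hle (C + 1)
    rw [abs_of_nonneg (by linarith : (0:ℝ) ≤ C + 1)] at h2
    linarith
  obtain ⟨R₀, hR₀⟩ := eventually_atTop.mp (tendsto_atTop.mp ϑsl
    (conjHalf ϑbar (Θbar (C + 1) - ϑbar 0) + A + Θbar 1 + |Θbar 0|))
  refine ⟨max R₀ 1, lt_of_lt_of_le one_pos (le_max_right _ _), ?_⟩
  intro s₁ hs₁ t₁ ht₁ q₁ p₁ hq₁ hsub₁ s₂ hs₂ t₂ ht₂ q₂ p₂ hq₂ hsub₂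
  -- bound |p₁|
  have hb1 := hbound s₁ hs₁ (q₁ + 1) t₁ ht₁
  have hb2 := hbound s₁ hs₁ (q₁ - 1) t₁ ht₁
  have hbq := hbound s₁ hs₁ q₁ t₁ ht₁
  have habs1 : |q₁ + 1| ≤ C + 1 := by
    calc |q₁ + 1| ≤ |q₁| + |(1:ℝ)| := abs_add_le _ _
      _ ≤ C + 1 := by rw [abs_one]; linarith
  have habs2 : |q₁ - 1| ≤ C + 1 := by
    calc |q₁ - 1| ≤ |q₁| + |(1:ℝ)| := abs_sub _ _
      _ ≤ C + 1 := by rw [abs_one]; linarith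
  have hΘ1 : Θbar |q₁ + 1| ≤ Θbar (C + 1) :=
    Θmono (mem_Ici.mpr (abs_nonneg _)) (mem_Ici.mpr (by linarith)) habs1
  have hΘ2 : Θbar |q₁ - 1| ≤ Θbar (C + 1) :=
    Θmono (mem_Ici.mpr (abs_nonneg _)) (mem_Ici.mpr (by linarith)) habs2
  have hϑq : ϑbar 0 ≤ ϑbar |q₁| :=
    ϑmono (mem_Ici.mpr le_rfl) (mem_Ici.mpr (abs_nonneg _)) (abs_nonneg _)
  have hp₁ : |p₁| ≤ Θbar (C + 1) - ϑbar 0 := by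
    have h1 := hsub₁ (q₁ + 1)
    have h2 := hsub₁ (q₁ - 1)
    have e1 : p₁ * (q₁ + 1 - q₁) = p₁ := by ring
    have e2 : p₁ * (q₁ - 1 - q₁) = -p₁ := by ring
    rw [e1] at h1; rw [e2] at h2
    rw [abs_le]
    exact ⟨by linarith [hb2.2, hbq.1], by linarith [hb1.2, hbq.1]⟩
  have hbddϑ := superlinear_bdd ϑmono ϑsl hP₁0
  have hK : conjHalf ϑbar |p₁| ≤ conjHalf ϑbar (Θbar (C + 1) - ϑbar 0) := by
    apply csSup_le ⟨_, mem_image_of_mem _ (mem_Ici.mpr (le_refl (0:ℝ)))⟩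
    rintro x ⟨m, hm', rfl⟩
    have hm : (0:ℝ) ≤ m := hm'
    calc |p₁| * m - ϑbar m ≤ (Θbar (C + 1) - ϑbar 0) * m - ϑbar m := by
          nlinarith [mul_le_mul_of_nonneg_right hp₁ hm]
      _ ≤ _ := le_csSup hbddϑ ⟨m, hm', rfl⟩
  -- lower bound |p₂|
  have hm₂1 : (1:ℝ) ≤ |q₂| := le_trans (le_max_right R₀ 1) hq₂.le
  have hm₂R : R₀ ≤ |q₂| := le_trans (le_max_left R₀ 1) hq₂.le
  have hϑm : (conjHalf ϑbar (Θbar (C + 1) - ϑbar 0) + A + Θbar 1 + |Θbar 0|) * |q₂| ≤ ϑbar |q₂| :=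
    (le_div_iff₀ (by linarith)).mp (hR₀ _ hm₂R)
  have hsub0 := hsub₂ 0
  have hbq2 := hbound s₂ hs₂ q₂ t₂ ht₂
  have hb02 := hbound s₂ hs₂ 0 t₂ ht₂
  rw [abs_zero] at hb02
  have hpq : ϑbar |q₂| - Θbar 0 ≤ p₂ * q₂ := by
    have e : p₂ * (0 - q₂) = -(p₂ * q₂) := by ring
    rw [e] at hsub0
    linarith [hbq2.1, hb02.2]
  have hpqabs : p₂ * q₂ ≤ |p₂| * |q₂| := by
    calc p₂ * q₂ ≤ |p₂ * q₂| := le_abs_self _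
      _ = |p₂| * |q₂| := abs_mul _ _
  have hp₂ : conjHalf ϑbar (Θbar (C + 1) - ϑbar 0) + A + Θbar 1 ≤ |p₂| := by
    nlinarith [le_abs_self (Θbar 0), abs_nonneg (Θbar 0), abs_nonneg p₂]
  have hfin : |p₂| * 1 - Θbar 1 ≤ conjHalf Θbar |p₂| :=
    le_csSup (superlinear_bdd Θmono Θsl (abs_nonneg p₂)) ⟨1, by norm_num, rfl⟩
  linarith
end

section
/- Fix T > 0 and C > 0. The minimal action Φ is Lipschitz continuous on the set A_C := { (s₁, t₁, s₂, t₂) ∈ ([0, ℓ] × [0, T])² : |s₁ − s₂| ≤ C(t₂ − t₁) }: there exists a constant ℓ* such that |Φ(s₁, t₁, s₂, t₂) − Φ(s₁', t₁', s₂', t₂')| ≤ ℓ* ( |s₁ − s₁'| + |t₁ − t₁'| + |s₂ − s₂'| + |t₂ − t₂'| ) for all (s₁, t₁, s₂, t₂), (s₁', t₁', s₂', t₂') ∈ A_C. -/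
open Set Filter MeasureTheory intervalIntegral

/-- The minimal action `Φ(s₁, t₁, s₂, t₂)`: infimum of the action over absolutely
continuous curves `ξ : [t₁, t₂] → [0, ℓ]` (given through an integrable a.e. derivative `g`)
with `ξ(t₁) = s₁` and `ξ(t₂) = s₂`. (If `t₁ = t₂` and `s₁ = s₂` this gives `Φ = 0`.) -/
noncomputable def minAction (L : ℝ → ℝ → ℝ → ℝ) (ℓ s₁ t₁ s₂ t₂ : ℝ) : ℝ :=
  sInf {v : ℝ | ∃ ξ g : ℝ → ℝ,
    IntervalIntegrable g volume t₁ t₂ ∧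
    (∀ τ ∈ Icc t₁ t₂, ξ τ = s₁ + ∫ u in t₁..τ, g u) ∧
    (∀ τ ∈ Icc t₁ t₂, ξ τ ∈ Icc 0 ℓ) ∧
    ξ t₁ = s₁ ∧ ξ t₂ = s₂ ∧
    IntervalIntegrable (fun τ => L (ξ τ) (g τ) τ) volume t₁ t₂ ∧
    v = ∫ τ in t₁..t₂, L (ξ τ) (g τ) τ}

/-!
On `A_C` the straight segment, of speed at most `C`, gives `Φ ≤ Θ(C) (t₂ - t₁)`, and coercivity
gives `L ≥ |λ| - c`, hence `Φ ≥ -c (t₂ - t₁)`; this settles pairs at distance `d ≳ ε` or of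
duration `≲ d`. Otherwise take an almost minimal curve for the primed data, with speed `g'`. Its
action bounds `∫ |g'|`, so by pigeonhole some window of length `8d` carries only `O(d)` of it. A
competitor for the unprimed data is spliced from segments of duration `d` correcting the
endpoints, the parts of the curve before and after the window translated in time by at most `2d`,
and a segment across the window absorbing the change of duration. The time-Lipschitz bound makes
the translations cost `O(d)` and the window segment has bounded speed, so `Φ ≤ Φ' + K d`.
-/

open scoped Interval

theorem ContinuousOn.exists_continuous_eqOn {X : Type*} [TopologicalSpace X] [NormalSpace X]
    {s : Set X} (hs : IsClosed s) {f : X → ℝ} (hf : ContinuousOn f s) :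
    ∃ F : X → ℝ, Continuous F ∧ EqOn F f s := by
  obtain ⟨F, hF⟩ := ContinuousMap.exists_restrict_eq hs ⟨s.domRestrict f, hf.domRestrict⟩
  exact ⟨F, F.continuous, fun x hx => DFunLike.congr_fun hF ⟨x, hx⟩⟩

theorem Superlinear.exists_le_add {ϑ : ℝ → ℝ} (hϑ : Superlinear ϑ) (hm : MonotoneOn ϑ (Ici 0)) :
    ∃ c, 0 ≤ c ∧ ∀ r, 0 ≤ r → r ≤ ϑ r + c := by
  obtain ⟨r₁, hr₁⟩ := eventually_atTop.1 (hϑ.eventually_ge_atTop 1)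
  refine ⟨max r₁ 1 + |ϑ 0|, by positivity, fun r hr => ?_⟩
  rcases le_total r (max r₁ 1) with hle | hge
  · have := hm self_mem_Ici hr hr
    linarith [neg_abs_le (ϑ 0)]
  · have hpos : 0 < r := lt_of_lt_of_le (by positivity) hge
    have := (one_le_div hpos).1 (hr₁ r ((le_max_left _ _).trans hge))
    linarith [abs_nonneg (ϑ 0), le_max_right r₁ 1]

theorem IntervalIntegrable.mono_of_le {f : ℝ → ℝ} {a b p q : ℝ}
    (hf : IntervalIntegrable f volume a b) (hap : a ≤ p) (hpq : p ≤ q) (hqb : q ≤ b) :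
    IntervalIntegrable f volume p q :=
  hf.mono_set (uIcc_subset_uIcc (mem_uIcc_of_le hap (hpq.trans hqb))
    (mem_uIcc_of_le (hap.trans hpq) hqb))

theorem intervalIntegrable_of_le_of_le {f lo hi : ℝ → ℝ} {a b : ℝ} (hab : a ≤ b)
    (hf : AEStronglyMeasurable f (volume.restrict (Ι a b)))
    (hlo : IntervalIntegrable lo volume a b) (hhi : IntervalIntegrable hi volume a b)
    (h₁ : ∀ τ ∈ Icc a b, lo τ ≤ f τ) (h₂ : ∀ τ ∈ Icc a b, f τ ≤ hi τ) :
    IntervalIntegrable f volume a b := by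
  have hsub : ∀ τ ∈ Ι a b, τ ∈ Icc a b := fun τ hτ => by
    rw [uIoc_of_le hab] at hτ
    exact Ioc_subset_Icc_self hτ
  rw [intervalIntegrable_iff]
  exact integrable_of_le_of_le hf
    ((ae_restrict_iff' measurableSet_uIoc).2 (Eventually.of_forall fun τ hτ => h₁ τ (hsub τ hτ)))
    ((ae_restrict_iff' measurableSet_uIoc).2 (Eventually.of_forall fun τ hτ => h₂ τ (hsub τ hτ)))
    hlo.def' hhi.def'

section Piecewise

variable {f₁ f₂ : ℝ → ℝ} {a b c : ℝ}

theorem intervalIntegrable_ite_le (hab : a ≤ b) (hbc : b ≤ c)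
    (h₁ : IntervalIntegrable f₁ volume a b) (h₂ : IntervalIntegrable f₂ volume b c) :
    IntervalIntegrable (fun τ => if τ ≤ b then f₁ τ else f₂ τ) volume a c := by
  refine (h₁.congr fun τ hτ => ?_).trans (h₂.congr fun τ hτ => ?_)
  · rw [uIoc_of_le hab] at hτ
    simp [hτ.2]
  · rw [uIoc_of_le hbc] at hτ
    simp [not_le.2 hτ.1]

theorem integral_ite_le (hab : a ≤ b) (hbc : b ≤ c)
    (h₁ : IntervalIntegrable f₁ volume a b) (h₂ : IntervalIntegrable f₂ volume b c) :
    ∫ τ in a..c, (if τ ≤ b then f₁ τ else f₂ τ) = (∫ τ in a..b, f₁ τ) + ∫ τ in b..c, f₂ τ := by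
  have hi := intervalIntegrable_ite_le hab hbc h₁ h₂
  rw [← integral_add_adjacent_intervals (hi.mono_of_le le_rfl hab hbc)
    (hi.mono_of_le hab hbc le_rfl)]
  congr 1
  · exact integral_congr_Ioo_of_le hab fun τ hτ => if_pos hτ.2.le
  · exact integral_congr_Ioo_of_le hbc fun τ hτ => if_neg (not_le.2 hτ.1)

end Piecewise

theorem exists_integral_window_le {f : ℝ → ℝ} {p q w : ℝ} (hf : IntervalIntegrable f volume p q)
    (hf0 : ∀ x, 0 ≤ f x) (hw : 0 < w) (hwpq : w ≤ q - p) :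
    ∃ a, p ≤ a ∧ a + w ≤ q ∧ (∫ x in a..a + w, f x) * (q - p) ≤ 2 * w * ∫ x in p..q, f x := by
  set n := ⌊(q - p) / w⌋₊
  have hn : (1 : ℝ) ≤ n := by
    exact_mod_cast Nat.le_floor (by simpa using (one_le_div hw).2 hwpq)
  have hn0 : 0 < n := by exact_mod_cast (by linarith : (0 : ℝ) < n)
  have hnw : n * w ≤ q - p := (le_div_iff₀ hw).1 (Nat.floor_le (div_nonneg (by linarith) hw.le))
  have hqp : q - p ≤ 2 * w * n := by
    have := (div_lt_iff₀ hw).1 (Nat.lt_floor_add_one ((q - p) / w))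
    nlinarith
  set c : ℕ → ℝ := fun k => p + k * w
  have hc : ∀ k ≤ n, p ≤ c k ∧ c k ≤ q := fun k hk => by
    have : (k : ℝ) * w ≤ n * w := by gcongr
    exact ⟨le_add_of_nonneg_right (by positivity), by simp only [c]; linarith⟩
  have hstep : ∀ k, c (k + 1) = c k + w := fun k => by simp only [c]; push_cast; ring
  have hsum : ∑ k ∈ Finset.range n, ∫ x in c k..c (k + 1), f x = ∫ x in c 0..c n, f x :=
    sum_integral_adjacent_intervals fun k hk =>
      hf.mono_of_le (hc k hk.le).1 (by rw [hstep]; linarith) (hc (k + 1) hk).2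
  have htail : ∫ x in c 0..c n, f x ≤ ∫ x in p..q, f x :=
    integral_mono_interval (by simp [c]) (by simpa [c] using (hc n le_rfl).1) (hc n le_rfl).2
      (Eventually.of_forall hf0) hf
  have hI0 : 0 ≤ ∫ x in p..q, f x := integral_nonneg (by linarith) fun x _ => hf0 x
  obtain ⟨k, hkn, hkle⟩ := Finset.exists_le_of_sum_le
    (f := fun k => ∫ x in c k..c (k + 1), f x) (g := fun _ => (∫ x in p..q, f x) / n)
    (Finset.nonempty_range_iff.2 hn0.ne') (by
      rw [Finset.sum_const, Finset.card_range, nsmul_eq_mul, mul_div_cancel₀ _ (by positivity)]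
      linarith)
  have hk : k + 1 ≤ n := Finset.mem_range.1 hkn
  refine ⟨c k, (hc k (by omega)).1, by rw [← hstep]; exact (hc (k + 1) hk).2, ?_⟩
  rw [← hstep]
  calc (∫ x in c k..c (k + 1), f x) * (q - p) ≤ (∫ x in p..q, f x) / n * (2 * w * n) :=
        mul_le_mul hkle hqp (by linarith) (by positivity)
    _ = 2 * w * ∫ x in p..q, f x := by field_simp

structure IsCurve (ℓ x a y b : ℝ) (ξ g : ℝ → ℝ) : Prop where
  intervalIntegrable : IntervalIntegrable g volume a b
  eq_add_integral : ∀ τ ∈ Icc a b, ξ τ = x + ∫ u in a..τ, g u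
  mem_Icc : ∀ τ ∈ Icc a b, ξ τ ∈ Icc 0 ℓ
  left : ξ a = x
  right : ξ b = y

def actionSet (L : ℝ → ℝ → ℝ → ℝ) (ℓ x a y b : ℝ) : Set ℝ :=
  {v | ∃ ξ g, IsCurve ℓ x a y b ξ g ∧
    IntervalIntegrable (fun τ => L (ξ τ) (g τ) τ) volume a b ∧
    v = ∫ τ in a..b, L (ξ τ) (g τ) τ}

theorem minAction_eq_sInf (L : ℝ → ℝ → ℝ → ℝ) (ℓ x a y b : ℝ) :
    minAction L ℓ x a y b = sInf (actionSet L ℓ x a y b) := by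
  simp only [minAction, actionSet]
  congr 1
  ext v
  constructor
  · rintro ⟨ξ, g, h₁, h₂, h₃, h₄, h₅, h₆, rfl⟩
    exact ⟨ξ, g, ⟨h₁, h₂, h₃, h₄, h₅⟩, h₆, rfl⟩
  · rintro ⟨ξ, g, ⟨h₁, h₂, h₃, h₄, h₅⟩, h₆, rfl⟩
    exact ⟨ξ, g, h₁, h₂, h₃, h₄, h₅, h₆, rfl⟩

namespace IsCurve

variable {ℓ x a y b : ℝ} {ξ g : ℝ → ℝ}

theorem continuousOn (h : IsCurve ℓ x a y b ξ g) : ContinuousOn ξ (Icc a b) :=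
  (continuousOn_const.add ((continuousOn_primitive_interval' h.intervalIntegrable
    left_mem_uIcc).mono Icc_subset_uIcc)).congr h.eq_add_integral

theorem restrict (h : IsCurve ℓ x a y b ξ g) {p q : ℝ} (hap : a ≤ p) (hpq : p ≤ q) (hqb : q ≤ b) :
    IsCurve ℓ (ξ p) p (ξ q) q ξ g where
  intervalIntegrable := h.intervalIntegrable.mono_of_le hap hpq hqb
  eq_add_integral τ hτ := by
    have hi := h.intervalIntegrable
    rw [h.eq_add_integral τ ⟨hap.trans hτ.1, hτ.2.trans hqb⟩,
      h.eq_add_integral p ⟨hap, hpq.trans hqb⟩, add_assoc,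
      integral_add_adjacent_intervals (hi.mono_of_le le_rfl hap (hpq.trans hqb))
        (hi.mono_of_le hap hτ.1 (hτ.2.trans hqb))]
  mem_Icc τ hτ := h.mem_Icc τ ⟨hap.trans hτ.1, hτ.2.trans hqb⟩
  left := rfl
  right := rfl

theorem abs_sub_le_integral_abs (h : IsCurve ℓ x a y b ξ g) (hab : a ≤ b) :
    |y - x| ≤ ∫ τ in a..b, |g τ| := by
  rw [← h.right, h.eq_add_integral b ⟨hab, le_rfl⟩, add_sub_cancel_left]
  exact abs_integral_le_integral_abs hab

theorem shift (h : IsCurve ℓ x a y b ξ g) (s : ℝ) :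
    IsCurve ℓ x (a + s) y (b + s) (fun τ => ξ (τ - s)) (fun τ => g (τ - s)) where
  intervalIntegrable := h.intervalIntegrable.comp_sub_right s
  eq_add_integral τ hτ := by
    rw [integral_comp_sub_right, add_sub_cancel_right]
    exact h.eq_add_integral _ ⟨le_sub_iff_add_le.2 hτ.1, sub_le_iff_le_add.2 hτ.2⟩
  mem_Icc τ hτ := h.mem_Icc _ ⟨le_sub_iff_add_le.2 hτ.1, sub_le_iff_le_add.2 hτ.2⟩
  left := by simpa using h.left
  right := by simpa using h.right

theorem append {z c : ℝ} {ξ' g' : ℝ → ℝ} (h : IsCurve ℓ x a y b ξ g)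
    (h' : IsCurve ℓ y b z c ξ' g') (hab : a ≤ b) (hbc : b ≤ c) :
    IsCurve ℓ x a z c (fun τ => if τ ≤ b then ξ τ else ξ' τ)
      (fun τ => if τ ≤ b then g τ else g' τ) where
  intervalIntegrable := intervalIntegrable_ite_le hab hbc h.intervalIntegrable h'.intervalIntegrable
  eq_add_integral τ hτ := by
    by_cases hτb : τ ≤ b
    · rw [if_pos hτb, h.eq_add_integral τ ⟨hτ.1, hτb⟩,
        integral_congr_Ioo_of_le hτ.1 fun u hu => if_pos (hu.2.le.trans hτb)]
    · rw [if_neg hτb, h'.eq_add_integral τ ⟨(not_le.1 hτb).le, hτ.2⟩,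
        integral_ite_le hab (not_le.1 hτb).le h.intervalIntegrable
          (h'.intervalIntegrable.mono_of_le le_rfl (not_le.1 hτb).le hτ.2),
        ← h.right, h.eq_add_integral b ⟨hab, le_rfl⟩, add_assoc]
  mem_Icc τ hτ := by
    by_cases hτb : τ ≤ b
    · rw [if_pos hτb]; exact h.mem_Icc τ ⟨hτ.1, hτb⟩
    · rw [if_neg hτb]; exact h'.mem_Icc τ ⟨(not_le.1 hτb).le, hτ.2⟩
  left := by rw [if_pos hab, h.left]
  right := by
    by_cases hcb : c ≤ b
    · obtain rfl := le_antisymm hcb hbc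
      rw [if_pos le_rfl, h.right, ← h'.left, h'.right]
    · rw [if_neg hcb, h'.right]

theorem exists_slow_window {d G : ℝ} (h : IsCurve ℓ x a y b ξ g)
    (hd : 0 < d) (hlen : 8 * d ≤ b - a) (hg : ∫ τ in a..b, |g τ| ≤ G * (b - a) + d) :
    ∃ p, a ≤ p ∧ p + 8 * d ≤ b ∧ |ξ (p + 8 * d) - ξ p| ≤ 4 * (4 * G + 1) * d := by
  obtain ⟨p, hap, hpb, hwin⟩ := exists_integral_window_le h.intervalIntegrable.abs
    (fun τ => abs_nonneg (g τ)) (by positivity : 0 < 8 * d) hlen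
  refine ⟨p, hap, hpb, ((h.restrict hap (by linarith) hpb).abs_sub_le_integral_abs
    (by linarith)).trans (le_of_mul_le_mul_right ?_ (by linarith : 0 < b - a))⟩
  nlinarith

end IsCurve

section Action

variable {L : ℝ → ℝ → ℝ → ℝ} {ℓ T x a y b : ℝ} {ξ g : ℝ → ℝ}

theorem IsCurve.aestronglyMeasurable_action
    (hL : ContinuousOn (fun p : ℝ × ℝ × ℝ => L p.1 p.2.1 p.2.2) (Icc 0 ℓ ×ˢ univ ×ˢ Ici 0))
    (h : IsCurve ℓ x a y b ξ g) (ha : 0 ≤ a) (hab : a ≤ b) :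
    AEStronglyMeasurable (fun τ => L (ξ τ) (g τ) τ) (volume.restrict (Ι a b)) := by
  obtain ⟨F, hF, hFL⟩ :=
    hL.exists_continuous_eqOn (isClosed_Icc.prod (isClosed_univ.prod isClosed_Ici))
  have hξ : AEMeasurable ξ (volume.restrict (Ι a b)) := by
    rw [uIoc_of_le hab]
    exact (h.continuousOn.mono Ioc_subset_Icc_self).aemeasurable measurableSet_Ioc
  have hg : AEMeasurable g (volume.restrict (Ι a b)) :=
    h.intervalIntegrable.def'.aemeasurable
  refine (hF.comp_aestronglyMeasurable
    (hξ.prodMk (hg.prodMk aemeasurable_id)).aestronglyMeasurable).congr ?_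
  refine (ae_restrict_iff' measurableSet_uIoc).2 (Eventually.of_forall fun τ hτ => ?_)
  rw [uIoc_of_le hab] at hτ
  exact hFL ⟨h.mem_Icc τ (Ioc_subset_Icc_self hτ), mem_univ _, ha.trans hτ.1.le⟩

theorem IsCurve.integral_abs_le {c : ℝ}
    (hc : ∀ s ∈ Icc 0 ℓ, ∀ lam, ∀ t ∈ Icc 0 T, |lam| ≤ L s lam t + c)
    (h : IsCurve ℓ x a y b ξ g) (hI : IntervalIntegrable (fun τ => L (ξ τ) (g τ) τ) volume a b)
    (hab : a ≤ b) (ha : 0 ≤ a) (hb : b ≤ T) :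
    ∫ τ in a..b, |g τ| ≤ (∫ τ in a..b, L (ξ τ) (g τ) τ) + c * (b - a) := by
  have := integral_mono_on hab h.intervalIntegrable.abs (hI.add intervalIntegrable_const)
    fun τ hτ => hc _ (h.mem_Icc τ hτ) _ τ ⟨ha.trans hτ.1, hτ.2.trans hb⟩
  rwa [integral_add hI intervalIntegrable_const, intervalIntegral.integral_const, smul_eq_mul,
    mul_comm] at this

theorem mul_le_of_mem_actionSet {m v : ℝ}
    (hm : ∀ s ∈ Icc 0 ℓ, ∀ lam, ∀ t ∈ Icc 0 T, m ≤ L s lam t)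
    (hab : a ≤ b) (ha : 0 ≤ a) (hb : b ≤ T) (hv : v ∈ actionSet L ℓ x a y b) :
    m * (b - a) ≤ v := by
  obtain ⟨ξ, g, h, hI, rfl⟩ := hv
  have := integral_mono_on hab intervalIntegrable_const hI
    fun τ hτ => hm _ (h.mem_Icc τ hτ) _ τ ⟨ha.trans hτ.1, hτ.2.trans hb⟩
  rwa [intervalIntegral.integral_const, smul_eq_mul, mul_comm] at this

theorem exists_mem_actionSet_of_segment
    (hL : ContinuousOn (fun p : ℝ × ℝ × ℝ => L p.1 p.2.1 p.2.2) (Icc 0 ℓ ×ˢ univ ×ˢ Ici 0))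
    {R K : ℝ} (hK : ∀ s ∈ Icc 0 ℓ, ∀ lam, |lam| ≤ R → ∀ t ∈ Icc 0 T, L s lam t ≤ K)
    (hx : x ∈ Icc 0 ℓ) (hy : y ∈ Icc 0 ℓ) (hR : 0 ≤ R) (hab : a ≤ b) (ha : 0 ≤ a) (hb : b ≤ T)
    (hxy : |y - x| ≤ R * (b - a)) :
    ∃ v ∈ actionSet L ℓ x a y b, v ≤ K * (b - a) := by
  set w := (y - x) / (b - a)
  have hw : |w| ≤ R := by
    rw [abs_div, abs_of_nonneg (sub_nonneg.2 hab)]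
    exact div_le_of_le_mul₀ (sub_nonneg.2 hab) hR hxy
  have hmem : ∀ τ ∈ Icc a b, x + (τ - a) * w ∈ Icc 0 ℓ := fun τ hτ => by
    have := (convex_Icc 0 ℓ).add_smul_sub_mem hx hy (t := (τ - a) / (b - a))
      ⟨div_nonneg (sub_nonneg.2 hτ.1) (sub_nonneg.2 hab),
        div_le_one_of_le₀ (sub_le_sub_right hτ.2 a) (sub_nonneg.2 hab)⟩
    rwa [smul_eq_mul, div_mul_comm, mul_comm] at this
  have hcurve : IsCurve ℓ x a y b (fun τ => x + (τ - a) * w) (fun _ => w) := by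
    refine ⟨intervalIntegrable_const, fun τ _ => ?_, hmem, by simp, ?_⟩
    · rw [intervalIntegral.integral_const, smul_eq_mul]
    · -- for `a = b` the speed is the junk value `(y - x) / 0 = 0`, and `hxy` forces `y = x`
      rw [← mul_div_assoc, mul_div_cancel_left_of_imp fun h => by simpa [h] using hxy]
      ring
  have hcont : ContinuousOn (fun τ => L (x + (τ - a) * w) w τ) (uIcc a b) := by
    rw [uIcc_of_le hab]
    exact hL.comp (f := fun τ => (x + (τ - a) * w, w, τ)) (by fun_prop)
      fun τ hτ => ⟨hmem τ hτ, mem_univ _, ha.trans hτ.1⟩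
  have hI : IntervalIntegrable (fun τ => L (x + (τ - a) * w) w τ) volume a b :=
    hcont.intervalIntegrable
  refine ⟨_, ⟨_, _, hcurve, hI, rfl⟩, ?_⟩
  have := integral_mono_on hab hI intervalIntegrable_const
    fun τ hτ => hK _ (hmem τ hτ) w hw τ ⟨ha.trans hτ.1, hτ.2.trans hb⟩
  rw [intervalIntegral.integral_const, smul_eq_mul] at this
  linarith

theorem add_mem_actionSet {z c v w : ℝ} (hab : a ≤ b) (hbc : b ≤ c)
    (hv : v ∈ actionSet L ℓ x a y b) (hw : w ∈ actionSet L ℓ y b z c) :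
    v + w ∈ actionSet L ℓ x a z c := by
  obtain ⟨ξ, g, h, hI, rfl⟩ := hv
  obtain ⟨ξ', g', h', hI', rfl⟩ := hw
  have hglue : (fun τ => L (if τ ≤ b then ξ τ else ξ' τ) (if τ ≤ b then g τ else g' τ) τ) =
      fun τ => if τ ≤ b then L (ξ τ) (g τ) τ else L (ξ' τ) (g' τ) τ := by
    ext τ
    split_ifs <;> rfl
  refine ⟨_, _, h.append h' hab hbc, ?_, ?_⟩ <;> rw [hglue]
  · exact intervalIntegrable_ite_le hab hbc hI hI'
  · exact (integral_ite_le hab hbc hI hI').symm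

theorem exists_mem_actionSet_of_shift
    (hL : ContinuousOn (fun p : ℝ × ℝ × ℝ => L p.1 p.2.1 p.2.2) (Icc 0 ℓ ×ˢ univ ×ˢ Ici 0))
    {m α β ε s : ℝ} (hm : ∀ s ∈ Icc 0 ℓ, ∀ lam, ∀ t ∈ Icc 0 T, m ≤ L s lam t)
    (hLt : ∀ s ∈ Icc 0 ℓ, ∀ lam : ℝ, ∀ t₁ ∈ Icc 0 T, ∀ t₂ ∈ Icc 0 T, |t₂ - t₁| < ε →
      L s lam t₁ - L s lam t₂ ≤ (α * |lam| + β) * |t₂ - t₁|)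
    (h : IsCurve ℓ x a y b ξ g) (hI : IntervalIntegrable (fun τ => L (ξ τ) (g τ) τ) volume a b)
    (hab : a ≤ b) (ha : 0 ≤ a) (hb : b ≤ T) (has : 0 ≤ a + s) (hbs : b + s ≤ T) (hs : |s| < ε) :
    ∃ v ∈ actionSet L ℓ x (a + s) y (b + s),
      v ≤ (∫ τ in a..b, L (ξ τ) (g τ) τ) + |s| * ∫ τ in a..b, (α * |g τ| + β) := by
  have hE : IntervalIntegrable (fun τ => α * |g τ| + β) volume a b :=
    (h.intervalIntegrable.abs.const_mul α).add intervalIntegrable_const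
  have hU : IntervalIntegrable (fun τ => L (ξ τ) (g τ) τ + |s| * (α * |g τ| + β)) volume a b :=
    hI.add (hE.const_mul |s|)
  have hUs := hU.comp_sub_right s
  have hmem : ∀ τ ∈ Icc (a + s) (b + s), τ - s ∈ Icc a b := fun τ hτ =>
    ⟨le_sub_iff_add_le.2 hτ.1, sub_le_iff_le_add.2 hτ.2⟩
  have hle : ∀ τ ∈ Icc (a + s) (b + s), L (ξ (τ - s)) (g (τ - s)) τ ≤
      L (ξ (τ - s)) (g (τ - s)) (τ - s) + |s| * (α * |g (τ - s)| + β) := fun τ hτ => by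
    have := hLt _ (h.mem_Icc _ (hmem τ hτ)) (g (τ - s)) τ ⟨has.trans hτ.1, hτ.2.trans hbs⟩ (τ - s)
      ⟨ha.trans (hmem τ hτ).1, (hmem τ hτ).2.trans hb⟩ (by rwa [sub_sub_cancel_left, abs_neg])
    rw [sub_sub_cancel_left, abs_neg] at this
    linarith
  have hge : ∀ τ ∈ Icc (a + s) (b + s), m ≤ L (ξ (τ - s)) (g (τ - s)) τ := fun τ hτ =>
    hm _ (h.mem_Icc _ (hmem τ hτ)) _ τ ⟨has.trans hτ.1, hτ.2.trans hbs⟩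
  have hab' : a + s ≤ b + s := by linarith
  have hIs := intervalIntegrable_of_le_of_le hab'
    ((h.shift s).aestronglyMeasurable_action hL has hab') intervalIntegrable_const hUs hge hle
  refine ⟨_, ⟨_, _, h.shift s, hIs, rfl⟩, ?_⟩
  calc (∫ τ in a + s..b + s, L (ξ (τ - s)) (g (τ - s)) τ)
      ≤ ∫ τ in a + s..b + s, (L (ξ (τ - s)) (g (τ - s)) (τ - s) + |s| * (α * |g (τ - s)| + β)) :=
        integral_mono_on hab' hIs hUs hle
    _ = (∫ τ in a..b, L (ξ τ) (g τ) τ) + |s| * ∫ τ in a..b, (α * |g τ| + β) := by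
        rw [integral_comp_sub_right (fun τ => L (ξ τ) (g τ) τ + |s| * (α * |g τ| + β)),
          add_sub_cancel_right, add_sub_cancel_right, integral_add hI (hE.const_mul _),
          intervalIntegral.integral_const_mul]

theorem le_max_of_abs_le {Θ : ℝ → ℝ}
    (hΘ : ∀ s ∈ Icc 0 ℓ, ∀ lam, ∀ t ∈ Icc 0 T, L s lam t ≤ Θ |lam|) (hΘm : MonotoneOn Θ (Ici 0))
    {R : ℝ} : ∀ s ∈ Icc 0 ℓ, ∀ lam, |lam| ≤ R → ∀ t ∈ Icc 0 T, L s lam t ≤ max (Θ R) 0 :=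
  fun s hs lam hlam t ht => (hΘ s hs lam t ht).trans
    ((hΘm (abs_nonneg lam) ((abs_nonneg lam).trans hlam) hlam).trans (le_max_left _ _))

theorem minAction_le_of_mem_actionSet {m v : ℝ}
    (hm : ∀ s ∈ Icc 0 ℓ, ∀ lam, ∀ t ∈ Icc 0 T, m ≤ L s lam t)
    (hab : a ≤ b) (ha : 0 ≤ a) (hb : b ≤ T) (hv : v ∈ actionSet L ℓ x a y b) :
    minAction L ℓ x a y b ≤ v := by
  rw [minAction_eq_sInf]
  exact csInf_le ⟨m * (b - a), fun _ hw => mul_le_of_mem_actionSet hm hab ha hb hw⟩ hv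

theorem abs_minAction_le
    (hL : ContinuousOn (fun p : ℝ × ℝ × ℝ => L p.1 p.2.1 p.2.2) (Icc 0 ℓ ×ˢ univ ×ˢ Ici 0))
    {c C K : ℝ} (hc : ∀ s ∈ Icc 0 ℓ, ∀ lam, ∀ t ∈ Icc 0 T, |lam| ≤ L s lam t + c)
    (hK : ∀ s ∈ Icc 0 ℓ, ∀ lam, |lam| ≤ C → ∀ t ∈ Icc 0 T, L s lam t ≤ K) (hC : 0 < C)
    (hx : x ∈ Icc 0 ℓ) (hy : y ∈ Icc 0 ℓ) (ha : a ∈ Icc 0 T) (hb : b ∈ Icc 0 T)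
    (hxy : |x - y| ≤ C * (b - a)) :
    |minAction L ℓ x a y b| ≤ max K c * (b - a) := by
  have hab : 0 ≤ b - a := (mul_nonneg_iff_of_pos_left hC).1 ((abs_nonneg _).trans hxy)
  have hm : ∀ s ∈ Icc 0 ℓ, ∀ lam, ∀ t ∈ Icc 0 T, -c ≤ L s lam t := fun s hs lam t ht => by
    linarith [hc s hs lam t ht, abs_nonneg lam]
  have hlow : ∀ v ∈ actionSet L ℓ x a y b, -c * (b - a) ≤ v := fun v hv =>
    mul_le_of_mem_actionSet hm (sub_nonneg.1 hab) ha.1 hb.2 hv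
  obtain ⟨v, hv, hvK⟩ := exists_mem_actionSet_of_segment hL hK hx hy hC.le (sub_nonneg.1 hab)
    ha.1 hb.2 (by rwa [abs_sub_comm])
  rw [minAction_eq_sInf, abs_le]
  constructor
  · have := le_csInf ⟨v, hv⟩ hlow
    nlinarith [le_max_right K c]
  · have := csInf_le ⟨_, hlow⟩ hv
    nlinarith [le_max_left K c]

end Action

section Splice

variable {L : ℝ → ℝ → ℝ → ℝ} {ℓ T x a y b : ℝ} {ξ g : ℝ → ℝ}

theorem exists_mem_actionSet_of_window
    (hL : ContinuousOn (fun p : ℝ × ℝ × ℝ => L p.1 p.2.1 p.2.2) (Icc 0 ℓ ×ˢ univ ×ˢ Ici 0))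
    {c R K α β ε δ p q σ₁ σ₂ : ℝ} (hm : ∀ s ∈ Icc 0 ℓ, ∀ lam, ∀ t ∈ Icc 0 T, -c ≤ L s lam t)
    (hK : ∀ s ∈ Icc 0 ℓ, ∀ lam, |lam| ≤ R → ∀ t ∈ Icc 0 T, L s lam t ≤ K) (hR : 0 ≤ R)
    (hα : 0 ≤ α) (hβ : 0 ≤ β)
    (hLt : ∀ s ∈ Icc 0 ℓ, ∀ lam : ℝ, ∀ t₁ ∈ Icc 0 T, ∀ t₂ ∈ Icc 0 T, |t₂ - t₁| < ε →
      L s lam t₁ - L s lam t₂ ≤ (α * |lam| + β) * |t₂ - t₁|)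
    (h : IsCurve ℓ x a y b ξ g) (hI : IntervalIntegrable (fun τ => L (ξ τ) (g τ) τ) volume a b)
    (ha : 0 ≤ a) (hb : b ≤ T) (hp : a ≤ p) (hpq : p ≤ q) (hq : q ≤ b) (hσ₁ : |σ₁| ≤ δ)
    (hσ₂ : |σ₂| ≤ δ) (hδ : δ < ε) (ha' : 0 ≤ a + σ₁) (hb' : b + σ₂ ≤ T)
    (hwindow : p + σ₁ ≤ q + σ₂) (hslow : |ξ q - ξ p| ≤ R * (q + σ₂ - (p + σ₁))) :
    ∃ v ∈ actionSet L ℓ x (a + σ₁) y (b + σ₂), v ≤ (∫ τ in a..b, L (ξ τ) (g τ) τ) +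
      c * (q - p) + K * (q + σ₂ - (p + σ₁)) + 2 * δ * ∫ τ in a..b, (α * |g τ| + β) := by
  obtain ⟨v₁, hv₁, hv₁le⟩ := exists_mem_actionSet_of_shift hL hm hLt (h.restrict le_rfl hp
    (hpq.trans hq)) (hI.mono_of_le le_rfl hp (hpq.trans hq)) hp ha (by linarith) ha'
    (by linarith) (hσ₁.trans_lt hδ)
  obtain ⟨v₂, hv₂, hv₂le⟩ := exists_mem_actionSet_of_segment hL hK (h.mem_Icc p ⟨hp, by linarith⟩)
    (h.mem_Icc q ⟨by linarith, hq⟩) hR hwindow (by linarith) (by linarith) hslow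
  obtain ⟨v₃, hv₃, hv₃le⟩ := exists_mem_actionSet_of_shift hL hm hLt (h.restrict (hp.trans hpq)
    hq le_rfl) (hI.mono_of_le (hp.trans hpq) hq le_rfl) hq (by linarith) hb (by linarith) hb'
    (hσ₂.trans_lt hδ)
  rw [h.left] at hv₁
  rw [h.right] at hv₃
  refine ⟨_, add_mem_actionSet (by linarith) (by linarith)
    (add_mem_actionSet (by linarith) hwindow hv₁ hv₂) hv₃, ?_⟩
  have hsplit : ∫ τ in a..b, L (ξ τ) (g τ) τ = (∫ τ in a..p, L (ξ τ) (g τ) τ) +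
      (∫ τ in p..q, L (ξ τ) (g τ) τ) + ∫ τ in q..b, L (ξ τ) (g τ) τ := by
    rw [integral_add_adjacent_intervals (hI.mono_of_le le_rfl hp (hpq.trans hq))
        (hI.mono_of_le hp hpq hq),
      integral_add_adjacent_intervals (hI.mono_of_le le_rfl (hp.trans hpq) hq)
        (hI.mono_of_le (hp.trans hpq) hq le_rfl)]
  have hmiddle : -c * (q - p) ≤ ∫ τ in p..q, L (ξ τ) (g τ) τ :=
    mul_le_of_mem_actionSet hm hpq (by linarith) (by linarith)
      ⟨ξ, g, h.restrict hp hpq hq, hI.mono_of_le hp hpq hq, rfl⟩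
  have hE : IntervalIntegrable (fun τ => α * |g τ| + β) volume a b :=
    (h.intervalIntegrable.abs.const_mul α).add intervalIntegrable_const
  have hE0 : ∀ τ, 0 ≤ α * |g τ| + β := fun τ => by positivity
  have hpiece : ∀ {u w σ : ℝ}, a ≤ u → u ≤ w → w ≤ b → |σ| ≤ δ →
      |σ| * ∫ τ in u..w, (α * |g τ| + β) ≤ δ * ∫ τ in a..b, (α * |g τ| + β) :=
    fun hu huw hw hσ => mul_le_mul hσ (integral_mono_interval hu huw hw (Eventually.of_forall hE0)
      hE) (integral_nonneg huw fun τ _ => hE0 τ) ((abs_nonneg _).trans hσ)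
  linarith [hpiece le_rfl hp (hpq.trans hq) hσ₁, hpiece (hp.trans hpq) hq le_rfl hσ₂]

theorem exists_mem_actionSet_of_splice
    (hL : ContinuousOn (fun p : ℝ × ℝ × ℝ => L p.1 p.2.1 p.2.2) (Icc 0 ℓ ×ˢ univ ×ˢ Ici 0))
    {c R K α β ε : ℝ} (hm : ∀ s ∈ Icc 0 ℓ, ∀ lam, ∀ t ∈ Icc 0 T, -c ≤ L s lam t)
    (hK : ∀ s ∈ Icc 0 ℓ, ∀ lam, |lam| ≤ R → ∀ t ∈ Icc 0 T, L s lam t ≤ K) (hR : 1 ≤ R)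
    (hK0 : 0 ≤ K) (hα : 0 ≤ α) (hβ : 0 ≤ β)
    (hLt : ∀ s ∈ Icc 0 ℓ, ∀ lam : ℝ, ∀ t₁ ∈ Icc 0 T, ∀ t₂ ∈ Icc 0 T, |t₂ - t₁| < ε →
      L s lam t₁ - L s lam t₂ ≤ (α * |lam| + β) * |t₂ - t₁|)
    {s₁ t₁ s₂ t₂ s₁' t₁' s₂' t₂' d p : ℝ} (h : IsCurve ℓ s₁' t₁' s₂' t₂' ξ g)
    (hI : IntervalIntegrable (fun τ => L (ξ τ) (g τ) τ) volume t₁' t₂')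
    (hs₁ : s₁ ∈ Icc 0 ℓ) (hs₂ : s₂ ∈ Icc 0 ℓ) (ht₁ : 0 ≤ t₁) (ht₂ : t₂ ≤ T)
    (ht₁' : 0 ≤ t₁') (ht₂' : t₂' ≤ T) (hd : 0 < d) (hdε : 2 * d < ε)
    (hs₁d : |s₁ - s₁'| ≤ d) (ht₁d : |t₁ - t₁'| ≤ d) (hs₂d : |s₂ - s₂'| ≤ d)
    (ht₂d : |t₂ - t₂'| ≤ d) (hp : t₁' ≤ p) (hp' : p + 8 * d ≤ t₂')
    (hslow : |ξ (p + 8 * d) - ξ p| ≤ 4 * R * d) :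
    ∃ v ∈ actionSet L ℓ s₁ t₁ s₂ t₂, v ≤ (∫ τ in t₁'..t₂', L (ξ τ) (g τ) τ) +
      (8 * c + 14 * K) * d + 4 * d * ∫ τ in t₁'..t₂', (α * |g τ| + β) := by
  obtain ⟨ht₁l, ht₁r⟩ := abs_le.1 ht₁d
  obtain ⟨ht₂l, ht₂r⟩ := abs_le.1 ht₂d
  have hs₁' : s₁' ∈ Icc 0 ℓ := h.left ▸ h.mem_Icc t₁' ⟨le_rfl, by linarith⟩
  have hs₂' : s₂' ∈ Icc 0 ℓ := h.right ▸ h.mem_Icc t₂' ⟨by linarith, le_rfl⟩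
  -- Shifting by `σ₁ := t₁ + d - t₁'` and `σ₂ := t₂ - d - t₂'` leaves time `d` at both ends for
  -- segments correcting the endpoints; the window segment then lasts between `4d` and `12d`.
  obtain ⟨v, hv, hvle⟩ := exists_mem_actionSet_of_window (σ₁ := t₁ + d - t₁')
    (σ₂ := t₂ - d - t₂') (δ := 2 * d) hL hm hK (by linarith) hα hβ hLt h hI ht₁' ht₂' hp
    (by linarith) hp' (abs_le.2 ⟨by linarith, by linarith⟩)
    (abs_le.2 ⟨by linarith, by linarith⟩) hdε (by linarith) (by linarith) (by linarith)
    (hslow.trans (by nlinarith))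
  rw [add_sub_cancel, show t₂' + (t₂ - d - t₂') = t₂ - d by ring] at hv
  obtain ⟨v₁, hv₁, hv₁K⟩ := exists_mem_actionSet_of_segment (a := t₁) (b := t₁ + d) hL hK hs₁
    hs₁' (by linarith) (by linarith) ht₁ (by linarith)
    (by rw [abs_sub_comm]; exact hs₁d.trans (by nlinarith))
  obtain ⟨v₂, hv₂, hv₂K⟩ := exists_mem_actionSet_of_segment (a := t₂ - d) (b := t₂) hL hK hs₂'
    hs₂ (by linarith) (by linarith) (by linarith) ht₂ (hs₂d.trans (by nlinarith))
  refine ⟨_, add_mem_actionSet (by linarith) (by linarith)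
    (add_mem_actionSet (by linarith) (by linarith) hv₁ hv) hv₂, ?_⟩
  have : K * (p + 8 * d + (t₂ - d - t₂') - (p + (t₁ + d - t₁'))) ≤ K * (12 * d) :=
    mul_le_mul_of_nonneg_left (by linarith) hK0
  linarith

theorem minAction_le_integral_add
    (hL : ContinuousOn (fun p : ℝ × ℝ × ℝ => L p.1 p.2.1 p.2.2) (Icc 0 ℓ ×ˢ univ ×ˢ Ici 0))
    {c G K α β ε : ℝ} (hm : ∀ s ∈ Icc 0 ℓ, ∀ lam, ∀ t ∈ Icc 0 T, -c ≤ L s lam t)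
    (hK : ∀ s ∈ Icc 0 ℓ, ∀ lam, |lam| ≤ 4 * G + 1 → ∀ t ∈ Icc 0 T, L s lam t ≤ K) (hG : 0 ≤ G)
    (hK0 : 0 ≤ K) (hα : 0 ≤ α) (hβ : 0 ≤ β)
    (hLt : ∀ s ∈ Icc 0 ℓ, ∀ lam : ℝ, ∀ t₁ ∈ Icc 0 T, ∀ t₂ ∈ Icc 0 T, |t₂ - t₁| < ε →
      L s lam t₁ - L s lam t₂ ≤ (α * |lam| + β) * |t₂ - t₁|)
    {s₁ t₁ s₂ t₂ s₁' t₁' s₂' t₂' d : ℝ} (h : IsCurve ℓ s₁' t₁' s₂' t₂' ξ g)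
    (hI : IntervalIntegrable (fun τ => L (ξ τ) (g τ) τ) volume t₁' t₂')
    (hs₁ : s₁ ∈ Icc 0 ℓ) (hs₂ : s₂ ∈ Icc 0 ℓ) (ht₁ : 0 ≤ t₁) (ht₂ : t₂ ≤ T)
    (ht₁' : 0 ≤ t₁') (ht₂' : t₂' ≤ T) (hd : 0 < d) (hdε : 2 * d < ε) (hlen : 8 * d ≤ t₂' - t₁')
    (hs₁d : |s₁ - s₁'| ≤ d) (ht₁d : |t₁ - t₁'| ≤ d) (hs₂d : |s₂ - s₂'| ≤ d)
    (ht₂d : |t₂ - t₂'| ≤ d) (hg : ∫ τ in t₁'..t₂', |g τ| ≤ G * (t₂' - t₁') + d) :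
    minAction L ℓ s₁ t₁ s₂ t₂ ≤ (∫ τ in t₁'..t₂', L (ξ τ) (g τ) τ) +
      (8 * c + 14 * K + 4 * (α * (G * T + T) + β * T)) * d := by
  obtain ⟨p, hp, hp', hslow⟩ := h.exists_slow_window hd hlen hg
  obtain ⟨w, hw, hwle⟩ := exists_mem_actionSet_of_splice hL hm hK (by linarith) hK0 hα hβ hLt h
    hI hs₁ hs₂ ht₁ ht₂ ht₁' ht₂' hd hdε hs₁d ht₁d hs₂d ht₂d hp hp' hslow
  have hE : ∫ τ in t₁'..t₂', (α * |g τ| + β) ≤ α * (G * T + T) + β * T := by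
    rw [integral_add (h.intervalIntegrable.abs.const_mul α) intervalIntegrable_const,
      intervalIntegral.integral_const_mul, intervalIntegral.integral_const, smul_eq_mul]
    have : G * (t₂' - t₁') ≤ G * T := mul_le_mul_of_nonneg_left (by linarith) hG
    nlinarith
  have := mul_le_mul_of_nonneg_left hE (by positivity : (0 : ℝ) ≤ 4 * d)
  have hΦ := minAction_le_of_mem_actionSet hm
    (by linarith [abs_le.1 ht₁d, abs_le.1 ht₂d]) ht₁ ht₂ hw
  linarith

end Splice

theorem exists_minAction_le_add {L : ℝ → ℝ → ℝ → ℝ} {ℓ T : ℝ}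
    (hL : ContinuousOn (fun p : ℝ × ℝ × ℝ => L p.1 p.2.1 p.2.2) (Icc 0 ℓ ×ˢ univ ×ˢ Ici 0))
    {c C α β ε : ℝ} {Θ : ℝ → ℝ} (hc : ∀ s ∈ Icc 0 ℓ, ∀ lam, ∀ t ∈ Icc 0 T, |lam| ≤ L s lam t + c)
    (hc0 : 0 ≤ c) (hΘ : ∀ s ∈ Icc 0 ℓ, ∀ lam, ∀ t ∈ Icc 0 T, L s lam t ≤ Θ |lam|)
    (hΘm : MonotoneOn Θ (Ici 0)) (hT : 0 ≤ T) (hC : 0 < C) (hα : 0 ≤ α) (hβ : 0 ≤ β)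
    (hLt : ∀ s ∈ Icc 0 ℓ, ∀ lam : ℝ, ∀ t₁ ∈ Icc 0 T, ∀ t₂ ∈ Icc 0 T, |t₂ - t₁| < ε →
      L s lam t₁ - L s lam t₂ ≤ (α * |lam| + β) * |t₂ - t₁|) :
    ∃ K, 0 ≤ K ∧ ∀ s₁ ∈ Icc 0 ℓ, ∀ s₂ ∈ Icc 0 ℓ, ∀ t₁ ∈ Icc 0 T, ∀ t₂ ∈ Icc 0 T,
      ∀ s₁' ∈ Icc 0 ℓ, ∀ s₂' ∈ Icc 0 ℓ, ∀ t₁' ∈ Icc 0 T, ∀ t₂' ∈ Icc 0 T,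
      |s₁' - s₂'| ≤ C * (t₂' - t₁') →
      let d := |s₁ - s₁'| + |t₁ - t₁'| + |s₂ - s₂'| + |t₂ - t₂'|
      0 < d → 2 * d < ε → 8 * d ≤ t₂' - t₁' →
      minAction L ℓ s₁ t₁ s₂ t₂ ≤ minAction L ℓ s₁' t₁' s₂' t₂' + K * d := by
  have hm : ∀ s ∈ Icc 0 ℓ, ∀ lam, ∀ t ∈ Icc 0 T, -c ≤ L s lam t := fun s hs lam t ht => by
    linarith [hc s hs lam t ht, abs_nonneg lam]
  -- `G` bounds the mean speed of an almost minimizer, `4 * G + 1` the speed across its slow window.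
  set G := max (Θ C) 0 + c
  set K := max (Θ (4 * G + 1)) 0
  refine ⟨1 + 8 * c + 14 * K + 4 * (α * (G * T + T) + β * T), by positivity, ?_⟩
  intro s₁ hs₁ s₂ hs₂ t₁ ht₁ t₂ ht₂ s₁' hs₁' s₂' hs₂' t₁' ht₁' t₂' ht₂' hAC' d hd hdε hlen
  obtain ⟨hs₁d, ht₁d, hs₂d, ht₂d⟩ :
      |s₁ - s₁'| ≤ d ∧ |t₁ - t₁'| ≤ d ∧ |s₂ - s₂'| ≤ d ∧ |t₂ - t₂'| ≤ d := by
    refine ⟨?_, ?_, ?_, ?_⟩ <;> linarith [abs_nonneg (s₁ - s₁'), abs_nonneg (t₁ - t₁'),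
      abs_nonneg (s₂ - s₂'), abs_nonneg (t₂ - t₂')]
  obtain ⟨v', hv', hv'C⟩ := exists_mem_actionSet_of_segment hL (le_max_of_abs_le hΘ hΘm) hs₁'
    hs₂' hC.le (by linarith) ht₁'.1 ht₂'.2 (by rwa [abs_sub_comm])
  have hΦ' := (minAction_le_of_mem_actionSet hm (by linarith) ht₁'.1 ht₂'.2 hv').trans hv'C
  obtain ⟨_, ⟨ξ, g, h, hI, rfl⟩, hv⟩ := exists_lt_of_csInf_lt ⟨v', hv'⟩
    (lt_add_of_pos_right (sInf (actionSet L ℓ s₁' t₁' s₂' t₂')) hd)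
  rw [← minAction_eq_sInf] at hv
  have hg : ∫ τ in t₁'..t₂', |g τ| ≤ G * (t₂' - t₁') + d := by
    linarith [h.integral_abs_le hc hI (by linarith) ht₁'.1 ht₂'.2]
  linarith [minAction_le_integral_add hL hm (le_max_of_abs_le hΘ hΘm) (by positivity)
    (le_max_right _ _) hα hβ hLt h hI hs₁ hs₂ ht₁.1 ht₂.2 ht₁'.1 ht₂'.2 hd hdε hlen hs₁d ht₁d
    hs₂d ht₂d hg]

theorem exists_abs_minAction_sub_le {L : ℝ → ℝ → ℝ → ℝ} {ℓ T : ℝ}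
    (hL : ContinuousOn (fun p : ℝ × ℝ × ℝ => L p.1 p.2.1 p.2.2) (Icc 0 ℓ ×ˢ univ ×ˢ Ici 0))
    {c C α β ε : ℝ} {Θ : ℝ → ℝ} (hc : ∀ s ∈ Icc 0 ℓ, ∀ lam, ∀ t ∈ Icc 0 T, |lam| ≤ L s lam t + c)
    (hc0 : 0 ≤ c) (hΘ : ∀ s ∈ Icc 0 ℓ, ∀ lam, ∀ t ∈ Icc 0 T, L s lam t ≤ Θ |lam|)
    (hΘm : MonotoneOn Θ (Ici 0)) (hT : 0 ≤ T) (hC : 0 < C) (hα : 0 ≤ α) (hβ : 0 ≤ β)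
    (hLt : ∀ s ∈ Icc 0 ℓ, ∀ lam : ℝ, ∀ t₁ ∈ Icc 0 T, ∀ t₂ ∈ Icc 0 T, |t₂ - t₁| < ε →
      L s lam t₁ - L s lam t₂ ≤ (α * |lam| + β) * |t₂ - t₁|) :
    ∃ K, 0 ≤ K ∧ ∀ s₁ ∈ Icc 0 ℓ, ∀ s₂ ∈ Icc 0 ℓ, ∀ t₁ ∈ Icc 0 T, ∀ t₂ ∈ Icc 0 T,
      |s₁ - s₂| ≤ C * (t₂ - t₁) →
      ∀ s₁' ∈ Icc 0 ℓ, ∀ s₂' ∈ Icc 0 ℓ, ∀ t₁' ∈ Icc 0 T, ∀ t₂' ∈ Icc 0 T,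
      |s₁' - s₂'| ≤ C * (t₂' - t₁') →
      let d := |s₁ - s₁'| + |t₁ - t₁'| + |s₂ - s₂'| + |t₂ - t₂'|
      0 < d → 2 * d < ε → 8 * d ≤ t₂ - t₁ → 8 * d ≤ t₂' - t₁' →
      |minAction L ℓ s₁ t₁ s₂ t₂ - minAction L ℓ s₁' t₁' s₂' t₂'| ≤ K * d := by
  obtain ⟨K, hK0, hK⟩ := exists_minAction_le_add hL hc hc0 hΘ hΘm hT hC hα hβ hLt
  refine ⟨K, hK0, fun s₁ hs₁ s₂ hs₂ t₁ ht₁ t₂ ht₂ hAC s₁' hs₁' s₂' hs₂' t₁' ht₁' t₂' ht₂' hAC'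
    hd hdε hlen hlen' => abs_sub_le_iff.2 ⟨?_, ?_⟩⟩
  · linarith [hK s₁ hs₁ s₂ hs₂ t₁ ht₁ t₂ ht₂ s₁' hs₁' s₂' hs₂' t₁' ht₁' t₂' ht₂' hAC' hd hdε hlen']
  · have h := hK s₁' hs₁' s₂' hs₂' t₁' ht₁' t₂' ht₂' s₁ hs₁ s₂ hs₂ t₁ ht₁ t₂ ht₂ hAC
    simp only [abs_sub_comm s₁', abs_sub_comm t₁', abs_sub_comm s₂', abs_sub_comm t₂'] at h
    linarith [h hd hdε hlen]

theorem abs_sub_le_of_local_bound {Φ Φ' u u' d B K ε T : ℝ} (hB : 0 ≤ B) (hK : 0 ≤ K)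
    (hε : 0 < ε) (hd : 0 ≤ d) (hu : u ≤ T) (hu' : u' ≤ T) (huu' : |u - u'| ≤ d)
    (hΦ : |Φ| ≤ B * u) (hΦ' : |Φ'| ≤ B * u') (hzero : d = 0 → Φ = Φ')
    (hlocal : 0 < d → 2 * d < ε → 8 * d ≤ u → 8 * d ≤ u' → |Φ - Φ'| ≤ K * d) :
    |Φ - Φ'| ≤ (K + 17 * B + 4 * B * T / ε) * d := by
  have htri : |Φ - Φ'| ≤ B * u + B * u' := (abs_sub Φ Φ').trans (add_le_add hΦ hΦ')
  have hBT : B * u + B * u' ≤ 2 * (B * T) := by nlinarith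
  have hBu : 0 ≤ B * u := (abs_nonneg Φ).trans hΦ
  have hBu' : 0 ≤ B * u' := (abs_nonneg Φ').trans hΦ'
  have hKd : 0 ≤ K * d := mul_nonneg hK hd
  have hBd : 0 ≤ B * d := mul_nonneg hB hd
  have hTd : 0 ≤ 4 * B * T / ε * d := by
    have : 0 ≤ B * T := by nlinarith
    exact mul_nonneg (div_nonneg (by linarith) hε.le) hd
  rw [add_mul, add_mul]
  rcases hd.eq_or_lt with rfl | hd
  · simp [hzero rfl]
  by_cases hdε : 2 * d < ε
  · by_cases hlen : 8 * d ≤ u ∧ 8 * d ≤ u'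
    · linarith [hlocal hd hdε hlen.1 hlen.2]
    · have : B * u + B * u' ≤ 17 * B * d := by
        obtain ⟨h₁, h₂⟩ := abs_le.1 huu'
        rw [not_and_or, not_le, not_le] at hlen
        rcases hlen with hlen | hlen <;> nlinarith
      linarith
  · have : 2 * (B * T) ≤ 4 * B * T / ε * d := by
      rw [div_mul_eq_mul_div, le_div_iff₀ hε]
      nlinarith
    linarith

theorem minAction_lipschitz_general (ℓ : ℝ) (L : ℝ → ℝ → ℝ → ℝ)
    (Lcont : ContinuousOn (fun p : ℝ × ℝ × ℝ => L p.1 p.2.1 p.2.2)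
      (Icc 0 ℓ ×ˢ (univ : Set ℝ) ×ˢ Ici 0))
    (Lcoer : ∀ T > (0:ℝ), ∃ ϑ Θ : ℝ → ℝ,
      MonotoneOn ϑ (Ici 0) ∧ ConvexOn ℝ (Ici 0) ϑ ∧ Superlinear ϑ ∧
      MonotoneOn Θ (Ici 0) ∧ ConvexOn ℝ (Ici 0) Θ ∧ Superlinear Θ ∧
      ∀ s ∈ Icc 0 ℓ, ∀ lam : ℝ, ∀ t ∈ Icc 0 T, ϑ |lam| ≤ L s lam t ∧ L s lam t ≤ Θ |lam|)
    (Ltlip : ∀ T > (0:ℝ), ∃ α β : ℝ, 0 ≤ α ∧ 0 ≤ β ∧ ∃ ε ∈ Ioc 0 T,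
      ∀ s ∈ Icc 0 ℓ, ∀ lam : ℝ, ∀ t₁ ∈ Icc 0 T, ∀ t₂ ∈ Icc 0 T, |t₂ - t₁| < ε →
        L s lam t₁ - L s lam t₂ ≤ (α * |lam| + β) * |t₂ - t₁|)
    (T C : ℝ) (hT : 0 < T) (hC : 0 < C) :
    ∃ K : ℝ,
      ∀ s₁ ∈ Icc 0 ℓ, ∀ s₂ ∈ Icc 0 ℓ, ∀ t₁ ∈ Icc 0 T, ∀ t₂ ∈ Icc 0 T,
        |s₁ - s₂| ≤ C * (t₂ - t₁) →
      ∀ s₁' ∈ Icc 0 ℓ, ∀ s₂' ∈ Icc 0 ℓ, ∀ t₁' ∈ Icc 0 T, ∀ t₂' ∈ Icc 0 T,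
        |s₁' - s₂'| ≤ C * (t₂' - t₁') →
        |minAction L ℓ s₁ t₁ s₂ t₂ - minAction L ℓ s₁' t₁' s₂' t₂'| ≤
          K * (|s₁ - s₁'| + |t₁ - t₁'| + |s₂ - s₂'| + |t₂ - t₂'|) := by
  obtain ⟨ϑ, Θ, hϑm, -, hϑ, hΘm, -, -, hbounds⟩ := Lcoer T hT
  obtain ⟨α, β, hα, hβ, ε, hε, hLt⟩ := Ltlip T hT
  obtain ⟨c, hc0, hcϑ⟩ := hϑ.exists_le_add hϑm
  have hc : ∀ s ∈ Icc 0 ℓ, ∀ lam, ∀ t ∈ Icc 0 T, |lam| ≤ L s lam t + c := fun s hs lam t ht =>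
    (hcϑ _ (abs_nonneg lam)).trans (by linarith [(hbounds s hs lam t ht).1])
  have hΘ : ∀ s ∈ Icc 0 ℓ, ∀ lam, ∀ t ∈ Icc 0 T, L s lam t ≤ Θ |lam| := fun s hs lam t ht =>
    (hbounds s hs lam t ht).2
  obtain ⟨K, hK0, hK⟩ := exists_abs_minAction_sub_le Lcont hc hc0 hΘ hΘm hT.le hC hα hβ hLt
  refine ⟨K + 17 * max (max (Θ C) 0) c + 4 * max (max (Θ C) 0) c * T / ε, ?_⟩
  intro s₁ hs₁ s₂ hs₂ t₁ ht₁ t₂ ht₂ hAC s₁' hs₁' s₂' hs₂' t₁' ht₁' t₂' ht₂' hAC'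
  refine abs_sub_le_of_local_bound (by positivity) hK0 hε.1 (by positivity)
    (by linarith [ht₁.1, ht₂.2]) (by linarith [ht₁'.1, ht₂'.2]) ?_
    (abs_minAction_le Lcont hc (le_max_of_abs_le hΘ hΘm) hC hs₁ hs₂ ht₁ ht₂ hAC)
    (abs_minAction_le Lcont hc (le_max_of_abs_le hΘ hΘm) hC hs₁' hs₂' ht₁' ht₂' hAC') ?_
    (hK s₁ hs₁ s₂ hs₂ t₁ ht₁ t₂ ht₂ hAC s₁' hs₁' s₂' hs₂' t₁' ht₁' t₂' ht₂' hAC')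
  · rw [show t₂ - t₁ - (t₂' - t₁') = (t₂ - t₂') - (t₁ - t₁') by ring]
    linarith [abs_sub (t₂ - t₂') (t₁ - t₁'), abs_nonneg (s₁ - s₁'), abs_nonneg (s₂ - s₂')]
  · intro h0
    obtain ⟨rfl, rfl, rfl, rfl⟩ : s₁ = s₁' ∧ t₁ = t₁' ∧ s₂ = s₂' ∧ t₂ = t₂' := by
      refine ⟨?_, ?_, ?_, ?_⟩ <;> rw [← sub_eq_zero, ← abs_eq_zero] <;>
        linarith [abs_nonneg (s₁ - s₁'), abs_nonneg (t₁ - t₁'), abs_nonneg (s₂ - s₂'),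
          abs_nonneg (t₂ - t₂')]
    rfl

/-- the minimal action `Φ` is Lipschitz continuous on
`A_C = { (s₁, t₁, s₂, t₂) ∈ ([0, ℓ] × [0, T])² : |s₁ − s₂| ≤ C (t₂ − t₁) }`
(Corollary `minactlip` of the paper). -/
theorem minAction_lipschitz (ℓ : ℝ) (hℓ : 0 < ℓ) (L : ℝ → ℝ → ℝ → ℝ)
    (Lcont : ContinuousOn (fun p : ℝ × ℝ × ℝ => L p.1 p.2.1 p.2.2)
      (Icc 0 ℓ ×ˢ (univ : Set ℝ) ×ˢ Ici 0))
    (Lconv : ∀ s ∈ Icc 0 ℓ, ∀ t ∈ Ici (0:ℝ), ConvexOn ℝ univ (fun lam => L s lam t))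
    (Lcoer : ∀ T > (0:ℝ), ∃ ϑ Θ : ℝ → ℝ,
      MonotoneOn ϑ (Ici 0) ∧ ConvexOn ℝ (Ici 0) ϑ ∧ Superlinear ϑ ∧
      MonotoneOn Θ (Ici 0) ∧ ConvexOn ℝ (Ici 0) Θ ∧ Superlinear Θ ∧
      ∀ s ∈ Icc 0 ℓ, ∀ lam : ℝ, ∀ t ∈ Icc 0 T, ϑ |lam| ≤ L s lam t ∧ L s lam t ≤ Θ |lam|)
    (Ltlip : ∀ T > (0:ℝ), ∃ α β : ℝ, 0 ≤ α ∧ 0 ≤ β ∧ ∃ ε ∈ Ioc 0 T,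
      ∀ s ∈ Icc 0 ℓ, ∀ lam : ℝ, ∀ t₁ ∈ Icc 0 T, ∀ t₂ ∈ Icc 0 T, |t₂ - t₁| < ε →
        L s lam t₁ - L s lam t₂ ≤ (α * |lam| + β) * |t₂ - t₁|)
    (T C : ℝ) (hT : 0 < T) (hC : 0 < C) :
    ∃ K : ℝ,
      ∀ s₁ ∈ Icc 0 ℓ, ∀ s₂ ∈ Icc 0 ℓ, ∀ t₁ ∈ Icc 0 T, ∀ t₂ ∈ Icc 0 T,
        |s₁ - s₂| ≤ C * (t₂ - t₁) →
      ∀ s₁' ∈ Icc 0 ℓ, ∀ s₂' ∈ Icc 0 ℓ, ∀ t₁' ∈ Icc 0 T, ∀ t₂' ∈ Icc 0 T,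
        |s₁' - s₂'| ≤ C * (t₂' - t₁') →
        |minAction L ℓ s₁ t₁ s₂ t₂ - minAction L ℓ s₁' t₁' s₂' t₂'| ≤
          K * (|s₁ - s₁'| + |t₁ - t₁'| + |s₂ - s₂'| + |t₂ - t₂'|) :=
  minAction_lipschitz_general ℓ L Lcont Lcoer Ltlip T C hT hC
end
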